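/- arXiv:2107.04728 — 6 statements merged into one kernel-verified Lean document; each statement's English description precedes it below -/
import Mathlib

section
/- Let G be a connected k-regular bipartite simple graph with k ≥ 3, and let b : V(G) → Bool be a 2-coloring witnessing the bipartition (adjacent vertices receive different values). Let e' = {u', v'} and e'' = {u'', v''} be two edges of G sharing no endpoint, and suppose that in the graph obtained from G by deleting the edges e' and e'' there is a connected component whose vertex set H contains u' and u'' but contains neither v' nor v''. Then b(u') ≠ b(u''), i.e., u' and u'' lie in different parts of the bipartition. -/
/-- Entanglement lemma. Let `G` be a connected `k`-regular bipartite
simple graph with `k ≥ 3`, with bipartition witnessed by `b : V → Bool`. Let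
`e' = {u', v'}` and `e'' = {u'', v''}` be two edges sharing no endpoint, and suppose
that after deleting `e'` and `e''` there is a connected component containing `u'` and
`u''` but neither `v'` nor `v''`. Then `b u' ≠ b u''`. -/
theorem cut_edges_attach_in_different_parts
    {V : Type*} [Fintype V] [DecidableEq V]
    (G : SimpleGraph V) [DecidableRel G.Adj]
    (k : ℕ) (hk : 3 ≤ k)
    (hconn : G.Connected) (hreg : G.IsRegularOfDegree k)
    (b : V → Bool) (hb : ∀ ⦃x y : V⦄, G.Adj x y → b x ≠ b y)
    (u' v' u'' v'' : V)
    (he' : G.Adj u' v') (he'' : G.Adj u'' v'')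
    (hshare : ({u', v'} : Set V) ∩ ({u'', v''} : Set V) = ∅)
    (hreach : (G.deleteEdges {s(u', v'), s(u'', v'')}).Reachable u' u'')
    (hnv' : ¬ (G.deleteEdges {s(u', v'), s(u'', v'')}).Reachable u' v')
    (hnv'' : ¬ (G.deleteEdges {s(u', v'), s(u'', v'')}).Reachable u' v'') :
    b u' ≠ b u'' := by
  classical
  set G' := G.deleteEdges {s(u', v'), s(u'', v'')} with hG'
  set S : Finset V := Finset.univ.filter (fun x => G'.Reachable u' x) with hSdef
  have hmem : ∀ x, x ∈ S ↔ G'.Reachable u' x := by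
    intro x; simp [hSdef]
  have hu'S : u' ∈ S := (hmem u').mpr (SimpleGraph.Reachable.refl u')
  have hu''S : u'' ∈ S := (hmem u'').mpr hreach
  have hv'S : v' ∉ S := fun h => hnv' ((hmem v').mp h)
  have hv''S : v'' ∉ S := fun h => hnv'' ((hmem v'').mp h)
  have hne : u' ≠ u'' := by
    intro h
    have := Set.eq_empty_iff_forall_notMem.mp hshare u'
    exact this ⟨Or.inl rfl, Or.inl h⟩
  -- cross edges are exactly the two deleted ones
  have hcross : ∀ x y, x ∈ S → G.Adj x y → y ∉ S →
      (x = u' ∧ y = v') ∨ (x = u'' ∧ y = v'') := by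
    intro x y hx hadj hy
    by_cases hd : s(x, y) ∈ ({s(u', v'), s(u'', v'')} : Set (Sym2 V))
    · rcases hd with hd | hd
      · rw [Sym2.eq_iff] at hd
        rcases hd with ⟨rfl, rfl⟩ | ⟨rfl, rfl⟩
        · exact Or.inl ⟨rfl, rfl⟩
        · exact absurd hx hv'S
      · rw [Set.mem_singleton_iff, Sym2.eq_iff] at hd
        rcases hd with ⟨rfl, rfl⟩ | ⟨rfl, rfl⟩
        · exact Or.inr ⟨rfl, rfl⟩
        · exact absurd hx hv''S
    · have hadj' : G'.Adj x y := SimpleGraph.deleteEdges_adj.mpr ⟨hadj, hd⟩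
      exact absurd ((hmem y).mpr (((hmem x).mp hx).trans hadj'.reachable)) hy
  -- leak count per vertex
  have hleak : ∀ x ∈ S, ((G.neighborFinset x).filter (fun y => y ∉ S)).card
      = (if x = u' then 1 else 0) + (if x = u'' then 1 else 0) := by
    intro x hx
    by_cases h1 : x = u'
    · subst h1
      have hset : (G.neighborFinset x).filter (fun y => y ∉ S) = {v'} := by
        ext y
        simp only [Finset.mem_filter, SimpleGraph.mem_neighborFinset, Finset.mem_singleton]
        constructor
        · rintro ⟨hadj, hyS⟩
          rcases hcross x y hx hadj hyS with ⟨_, rfl⟩ | ⟨h, _⟩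
          · rfl
          · exact absurd h hne
        · rintro rfl; exact ⟨he', hv'S⟩
      rw [hset]
      simp [hne]
    · by_cases h2 : x = u''
      · subst h2
        have hset : (G.neighborFinset x).filter (fun y => y ∉ S) = {v''} := by
          ext y
          simp only [Finset.mem_filter, SimpleGraph.mem_neighborFinset, Finset.mem_singleton]
          constructor
          · rintro ⟨hadj, hyS⟩
            rcases hcross x y hx hadj hyS with ⟨h, _⟩ | ⟨_, rfl⟩
            · exact absurd h h1
            · rfl
          · rintro rfl; exact ⟨he'', hv''S⟩
        rw [hset]
        simp [h1]
      · have hset : (G.neighborFinset x).filter (fun y => y ∉ S) = ∅ := by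
          ext y
          simp only [Finset.mem_filter, SimpleGraph.mem_neighborFinset,
            Finset.notMem_empty, iff_false, not_and]
          intro hadj hyS
          rcases hcross x y hx hadj hyS with ⟨h, _⟩ | ⟨h, _⟩
          · exact h1 h
          · exact h2 h
        rw [hset]
        simp [h1, h2]
  -- degree split
  have hdeg : ∀ x ∈ S, ((G.neighborFinset x).filter (fun y => y ∈ S)).card
      + ((G.neighborFinset x).filter (fun y => y ∉ S)).card = k := by
    intro x _
    rw [Finset.card_filter_add_card_filter_not]
    exact hreg x
  -- neighbors in S of a color-c vertex lie in the other color class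
  have hNB : ∀ c : Bool, ∀ x ∈ S.filter (fun z => b z = c),
      (G.neighborFinset x).filter (fun y => y ∈ S)
        = (S.filter (fun z => b z = !c)).filter (fun y => G.Adj x y) := by
    intro c x hx
    rw [Finset.mem_filter] at hx
    ext y
    simp only [Finset.mem_filter, SimpleGraph.mem_neighborFinset]
    constructor
    · rintro ⟨hadj, hyS⟩
      refine ⟨⟨hyS, ?_⟩, hadj⟩
      have := hb hadj
      rw [hx.2] at this
      cases hby : b y <;> cases c <;> simp_all
    · rintro ⟨⟨hyS, _⟩, hadj⟩
      exact ⟨hadj, hyS⟩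
  -- main counting equation per color
  have hmain : ∀ c : Bool, k * (S.filter (fun z => b z = c)).card
      = (∑ x ∈ S.filter (fun z => b z = c),
          ((S.filter (fun z => b z = !c)).filter (fun y => G.Adj x y)).card)
        + ((if b u' = c then 1 else 0) + (if b u'' = c then 1 else 0)) := by
    intro c
    have h1 : k * (S.filter (fun z => b z = c)).card
        = ∑ x ∈ S.filter (fun z => b z = c), k := by
      rw [Finset.sum_const, smul_eq_mul, mul_comm]
    rw [h1]
    have h2 : ∀ x ∈ S.filter (fun z => b z = c),
        k = ((S.filter (fun z => b z = !c)).filter (fun y => G.Adj x y)).card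
          + ((if x = u' then 1 else 0) + (if x = u'' then 1 else 0)) := by
      intro x hx
      have hxS : x ∈ S := (Finset.mem_filter.mp hx).1
      rw [← hNB c x hx, ← hleak x hxS, hdeg x hxS]
    rw [Finset.sum_congr rfl h2, Finset.sum_add_distrib, Finset.sum_add_distrib]
    have hia : (∑ x ∈ S.filter (fun z => b z = c), if x = u' then 1 else 0)
        = if b u' = c then 1 else 0 := by
      rw [Finset.sum_ite_eq' (S.filter (fun z => b z = c)) u' (fun _ => 1)]
      by_cases h : b u' = c <;> simp [h, hu'S]
    have hib : (∑ x ∈ S.filter (fun z => b z = c), if x = u'' then 1 else 0)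
        = if b u'' = c then 1 else 0 := by
      rw [Finset.sum_ite_eq' (S.filter (fun z => b z = c)) u'' (fun _ => 1)]
      by_cases h : b u'' = c <;> simp [h, hu''S]
    rw [hia, hib]
  -- symmetry of the edge count
  have hE : (∑ x ∈ S.filter (fun z => b z = true),
        ((S.filter (fun z => b z = false)).filter (fun y => G.Adj x y)).card)
      = (∑ x ∈ S.filter (fun z => b z = false),
        ((S.filter (fun z => b z = true)).filter (fun y => G.Adj x y)).card) := by
    simp_rw [Finset.card_filter]
    rw [Finset.sum_comm]
    apply Finset.sum_congr rfl
    intro x _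
    apply Finset.sum_congr rfl
    intro y _
    simp [G.adj_comm]
  intro hcon
  have h1 := hmain true
  have h2 := hmain false
  simp only [Bool.not_true, Bool.not_false] at h1 h2
  rw [hE] at h1
  cases hbu : b u' with
  | true =>
      have hb2 : b u'' = true := by rw [← hcon, hbu]
      rw [hbu, hb2] at h1 h2
      norm_num at h1 h2
      set a := (S.filter (fun z => b z = true)).card
      set bb := (S.filter (fun z => b z = false)).card
      set E := (∑ x ∈ S.filter (fun z => b z = false),
        ((S.filter (fun z => b z = true)).filter (fun y => G.Adj x y)).card)
      have hab : bb < a := by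
        by_contra h
        push_neg at h
        have := Nat.mul_le_mul_left k h
        omega
      have := Nat.mul_le_mul_left k (Nat.succ_le_of_lt hab)
      rw [Nat.mul_succ] at this
      omega
  | false =>
      have hb2 : b u'' = false := by rw [← hcon, hbu]
      rw [hbu, hb2] at h1 h2
      norm_num at h1 h2
      set a := (S.filter (fun z => b z = true)).card
      set bb := (S.filter (fun z => b z = false)).card
      set E := (∑ x ∈ S.filter (fun z => b z = false),
        ((S.filter (fun z => b z = true)).filter (fun y => G.Adj x y)).card)
      have hab : a < bb := by
        by_contra h
        push_neg at h
        have := Nat.mul_le_mul_left k h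
        omega
      have := Nat.mul_le_mul_left k (Nat.succ_le_of_lt hab)
      rw [Nat.mul_succ] at this
      omega
end

section
/- Let G be a connected k-regular bipartite simple graph. Then G has no cutpoint: for every vertex u of G, the induced subgraph of G on V(G) \ {u} is connected (when it is nonempty). -/
open Finset

private lemma rbnc_key {V : Type*} {G : SimpleGraph V} {u : V} {P : Set V}
    (huP : u ∉ P) (hcl : ∀ z w, z ∈ P → G.Adj z w → w ≠ u → w ∈ P) :
    ∀ {a c : V}, G.Walk a c → c = u → a ∈ P → ∃ z, z ∈ P ∧ G.Adj u z := by
  intro a c w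
  induction w with
  | nil => rintro rfl h; exact absurd h huP
  | cons hadj p ih =>
    rename_i v1 v2 v3
    intro hcu ha
    by_cases hv2 : v2 = u
    · exact ⟨v1, ha, by rw [← hv2]; exact hadj.symm⟩
    · exact ih hcu (hcl v1 v2 ha hadj hv2)

open Classical in
private lemma rbnc_count {V : Type*} [Fintype V] (G : SimpleGraph V) [DecidableRel G.Adj]
    (k : ℕ) (hreg : G.IsRegularOfDegree k)
    (b : V → Bool) (hb : ∀ ⦃x y : V⦄, G.Adj x y → b x ≠ b y)
    (u : V) (P : Set V) (huP : u ∉ P)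
    (hcl : ∀ z w, z ∈ P → G.Adj z w → w ≠ u → w ∈ P) :
    k ∣ (Finset.univ.filter (fun z => z ∈ P ∧ G.Adj u z)).card := by
  classical
  set A := univ.filter (fun z => z ∈ P ∧ b z ≠ b u) with hA
  set B := univ.filter (fun z => z ∈ P ∧ b z = b u) with hB
  have hnb : ∀ x' ∈ B, A.filter (fun y' => G.Adj x' y') = G.neighborFinset x' := by
    intro x' hx'
    simp only [hB, mem_filter, mem_univ, true_and] at hx'
    ext z
    simp only [mem_filter, SimpleGraph.mem_neighborFinset, hA, mem_univ, true_and]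
    constructor
    · rintro ⟨-, h⟩; exact h
    · intro h
      have hzu : z ≠ u := by rintro rfl; exact (hb h) hx'.2
      refine ⟨⟨hcl x' z hx'.1 h hzu, fun hzb => hb h (hx'.2.trans hzb.symm)⟩, h⟩
  have hEB : ∑ x' ∈ B, (A.filter (fun y' => G.Adj x' y')).card = k * B.card := by
    rw [Finset.sum_congr rfl (fun x' hx' => by
      rw [hnb x' hx', SimpleGraph.card_neighborFinset_eq_degree, hreg x'])]
    rw [Finset.sum_const, smul_eq_mul, mul_comm]
  have hswap : ∑ x' ∈ B, (A.filter (fun y' => G.Adj x' y')).card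
      = ∑ a ∈ A, (B.filter (fun y' => G.Adj a y')).card := by
    simp_rw [Finset.card_filter]
    rw [Finset.sum_comm]
    refine Finset.sum_congr rfl fun a _ => Finset.sum_congr rfl fun x' _ => ?_
    simp [SimpleGraph.adj_comm]
  have hA2 : ∀ a ∈ A, (B.filter (fun y' => G.Adj a y')).card
      + (if G.Adj u a then 1 else 0) = k := by
    intro a ha
    simp only [hA, mem_filter, mem_univ, true_and] at ha
    have h1 : (G.neighborFinset a).filter (fun y' => y' ≠ u)
        = B.filter (fun y' => G.Adj a y') := by
      ext z
      simp only [mem_filter, SimpleGraph.mem_neighborFinset, hB, mem_univ, true_and]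
      constructor
      · rintro ⟨hadj, hzu⟩
        refine ⟨⟨hcl a z ha.1 hadj hzu, ?_⟩, hadj⟩
        have h2 := hb hadj
        have h3 := ha.2
        cases hbz : b z <;> cases hbu : b u <;> cases hba : b a <;> simp_all
      · rintro ⟨⟨hzP, -⟩, hadj⟩
        exact ⟨hadj, fun h => huP (h ▸ hzP)⟩
    have h3 : ((G.neighborFinset a).filter (fun y' => ¬ y' ≠ u)).card
        = if G.Adj u a then 1 else 0 := by
      by_cases hadj : G.Adj u a
      · rw [if_pos hadj, Finset.card_eq_one]
        refine ⟨u, ?_⟩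
        ext z
        simp only [mem_filter, SimpleGraph.mem_neighborFinset, not_not,
          Finset.mem_singleton]
        constructor
        · rintro ⟨-, rfl⟩; rfl
        · rintro rfl; exact ⟨hadj.symm, rfl⟩
      · rw [if_neg hadj, Finset.card_eq_zero, Finset.eq_empty_iff_forall_notMem]
        intro z hz
        simp only [mem_filter, SimpleGraph.mem_neighborFinset, not_not] at hz
        obtain ⟨h, rfl⟩ := hz
        exact hadj h.symm
    have h4 := Finset.card_filter_add_card_filter_not
      (s := G.neighborFinset a) (p := fun y' => y' ≠ u)
    rw [h1, h3] at h4
    rw [h4, SimpleGraph.card_neighborFinset_eq_degree, hreg a]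
  have hE2 : ∑ a ∈ A, ((B.filter (fun y' => G.Adj a y')).card
      + (if G.Adj u a then 1 else 0)) = k * A.card := by
    rw [Finset.sum_congr rfl hA2, Finset.sum_const, smul_eq_mul, mul_comm]
  rw [Finset.sum_add_distrib, ← hswap, hEB] at hE2
  have htarget : univ.filter (fun z => z ∈ P ∧ G.Adj u z)
      = A.filter (fun z => G.Adj u z) := by
    ext z
    simp only [hA, mem_filter, mem_univ, true_and]
    constructor
    · rintro ⟨hzP, hadj⟩
      exact ⟨⟨hzP, fun h => hb hadj h.symm⟩, hadj⟩
    · rintro ⟨⟨hzP, -⟩, hadj⟩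
      exact ⟨hzP, hadj⟩
  rw [htarget, Finset.card_filter]
  have heq : (∑ a ∈ A, if G.Adj u a then 1 else 0)
      = k * A.card - k * B.card := by omega
  rw [heq]
  exact Nat.dvd_sub (Dvd.intro _ rfl) (Dvd.intro _ rfl)

/-- A connected `k`-regular bipartite simple graph has no cutpoint:
for every vertex `u`, the induced subgraph on `V \ {u}`, when nonempty, is connected. -/
theorem regular_bipartite_no_cutpoint
    {V : Type*} [Fintype V]
    (G : SimpleGraph V) [DecidableRel G.Adj]
    (k : ℕ) (hconn : G.Connected) (hreg : G.IsRegularOfDegree k)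
    (b : V → Bool) (hb : ∀ ⦃x y : V⦄, G.Adj x y → b x ≠ b y)
    (u : V) (hne : (({u}ᶜ : Set V)).Nonempty) :
    (G.induce ({u}ᶜ : Set V)).Connected := by
  classical
  rw [SimpleGraph.connected_iff]
  refine ⟨?_, hne.to_subtype⟩
  by_contra hpc
  rw [SimpleGraph.Preconnected] at hpc
  push_neg at hpc
  obtain ⟨x, y, hxy⟩ := hpc
  set S : Set V := {z | ∃ hz : z ∈ ({u}ᶜ : Set V),
      (G.induce ({u}ᶜ : Set V)).Reachable x ⟨z, hz⟩} with hSdef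
  have huS : u ∉ S := by
    rintro ⟨hz, -⟩
    simp at hz
  have hSclose : ∀ z w, z ∈ S → G.Adj z w → w ≠ u → w ∈ S := by
    rintro z w ⟨hz, hr⟩ hadj hwu
    have hw : w ∈ ({u}ᶜ : Set V) := by simpa using hwu
    refine ⟨hw, hr.trans (SimpleGraph.Adj.reachable ?_)⟩
    exact hadj
  set T : Set V := {z | z ≠ u ∧ z ∉ S} with hTdef
  have huT : u ∉ T := fun h => h.1 rfl
  have hTclose : ∀ z w, z ∈ T → G.Adj z w → w ≠ u → w ∈ T := by
    rintro z w ⟨hzu, hzS⟩ hadj hwu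
    exact ⟨hwu, fun hwS => hzS (hSclose w z hwS hadj.symm hzu)⟩
  have hxS : (x : V) ∈ S := ⟨x.2, SimpleGraph.Reachable.refl _⟩
  have hyS : (y : V) ∉ S := by
    rintro ⟨hz, hr⟩
    exact hxy hr
  have hyT : (y : V) ∈ T := ⟨fun h => y.2 (by simp [h]), hyS⟩
  have hkS : k ∣ (univ.filter (fun z => z ∈ S ∧ G.Adj u z)).card := by
    have h := rbnc_count G k hreg b hb u S huS hSclose
    convert h using 3
  have hkT : k ∣ (univ.filter (fun z => z ∈ T ∧ G.Adj u z)).card := by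
    have h := rbnc_count G k hreg b hb u T huT hTclose
    convert h using 3
  obtain ⟨wS⟩ := hconn.preconnected (x : V) u
  obtain ⟨wT⟩ := hconn.preconnected (y : V) u
  obtain ⟨zS, hzS, hzSadj⟩ := rbnc_key huS hSclose wS rfl hxS
  obtain ⟨zT, hzT, hzTadj⟩ := rbnc_key huT hTclose wT rfl hyT
  have h1S : 0 < (univ.filter (fun z => z ∈ S ∧ G.Adj u z)).card :=
    Finset.card_pos.mpr ⟨zS, by simp [hzS, hzSadj]⟩
  have h1T : 0 < (univ.filter (fun z => z ∈ T ∧ G.Adj u z)).card :=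
    Finset.card_pos.mpr ⟨zT, by simp [hzT, hzTadj]⟩
  have hkleS := Nat.le_of_dvd h1S hkS
  have hkleT := Nat.le_of_dvd h1T hkT
  have hdisj : Disjoint (univ.filter (fun z => z ∈ S ∧ G.Adj u z))
      (univ.filter (fun z => z ∈ T ∧ G.Adj u z)) := by
    rw [Finset.disjoint_left]
    rintro z hz hz'
    simp only [mem_filter, mem_univ, true_and] at hz hz'
    exact hz'.1.2 hz.1
  have hsub : (univ.filter (fun z => z ∈ S ∧ G.Adj u z))
      ∪ (univ.filter (fun z => z ∈ T ∧ G.Adj u z)) ⊆ G.neighborFinset u := by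
    intro z hz
    simp only [Finset.mem_union, mem_filter, mem_univ, true_and,
      SimpleGraph.mem_neighborFinset] at hz ⊢
    rcases hz with h | h <;> exact h.2
  have hle := Finset.card_le_card hsub
  rw [Finset.card_union_of_disjoint hdisj, SimpleGraph.card_neighborFinset_eq_degree,
    hreg u] at hle
  omega
end

section
/- Let G be a connected k-regular bipartite simple graph with k ≥ 2. Then G has no bridge: for every edge e of G, the graph obtained from G by deleting the edge e is connected. -/
open Finset

/-- A connected `k`-regular bipartite simple graph with `k ≥ 2`
has no bridge: deleting any single edge leaves the graph connected. -/
theorem regular_bipartite_no_bridge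
    {V : Type*} [Fintype V]
    (G : SimpleGraph V) [DecidableRel G.Adj]
    (k : ℕ) (hk : 2 ≤ k)
    (hconn : G.Connected) (hreg : G.IsRegularOfDegree k)
    (b : V → Bool) (hb : ∀ ⦃x y : V⦄, G.Adj x y → b x ≠ b y)
    (e : Sym2 V) (he : e ∈ G.edgeSet) :
    (G.deleteEdges {e}).Connected := by
  classical
  induction e using Sym2.ind with
  | _ x y =>
  rw [SimpleGraph.mem_edgeSet] at he
  set H := G.deleteEdges {s(x, y)} with hH
  have hHadj : ∀ u v : V, H.Adj u v ↔ G.Adj u v ∧ s(u, v) ≠ s(x, y) := by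
    intro u v
    simp [hH, SimpleGraph.deleteEdges_adj]
  by_contra hnc
  -- if x and y are reachable in H, then H is connected
  have key : (H.Reachable x y) → ∀ u v : V, G.Reachable u v → H.Reachable u v := by
    intro hxy u v huv
    obtain ⟨w⟩ := huv
    induction w with
    | nil => exact SimpleGraph.Reachable.refl _
    | @cons a c d h p ih =>
      refine SimpleGraph.Reachable.trans ?_ ih
      by_cases hc : s(a, c) = s(x, y)
      · rw [Sym2.eq_iff] at hc
        rcases hc with ⟨rfl, rfl⟩ | ⟨rfl, rfl⟩
        · exact hxy
        · exact hxy.symm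
      · exact SimpleGraph.Adj.reachable ((hHadj a c).2 ⟨h, hc⟩)
  have hnxy : ¬ H.Reachable x y := by
    intro hxy
    have : Nonempty V := hconn.nonempty
    exact hnc ⟨fun u v => key hxy u v (hconn.preconnected u v)⟩
  -- the component of x
  set C : Finset V := univ.filter (fun v => H.Reachable x v) with hC
  have hxC : x ∈ C := by
    simp only [hC, mem_filter, mem_univ, true_and]
    exact SimpleGraph.Reachable.refl x
  have hyC : y ∉ C := by simp [hC]; exact hnxy
  have hCadj : ∀ u v : V, H.Adj u v → (u ∈ C ↔ v ∈ C) := by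
    intro u v huv
    simp only [hC, mem_filter, mem_univ, true_and]
    exact ⟨fun h => h.trans huv.reachable, fun h => h.trans huv.symm.reachable⟩
  -- degrees in H
  have hdeg : ∀ v : V, v ≠ x → v ≠ y → H.degree v = k := by
    intro v hvx hvy
    have : H.neighborFinset v = G.neighborFinset v := by
      ext w
      simp only [SimpleGraph.mem_neighborFinset, hHadj]
      refine ⟨fun h => h.1, fun h => ⟨h, fun hs => ?_⟩⟩
      rw [Sym2.eq_iff] at hs
      rcases hs with ⟨rfl, rfl⟩ | ⟨rfl, rfl⟩ <;> simp_all
    rw [SimpleGraph.degree, this, ← SimpleGraph.degree]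
    exact hreg v
  have hdegx : H.degree x = k - 1 := by
    have h1 : H.neighborFinset x = (G.neighborFinset x).erase y := by
      ext w
      simp only [SimpleGraph.mem_neighborFinset, hHadj, mem_erase]
      constructor
      · rintro ⟨h, hne⟩
        refine ⟨fun hw => hne ?_, h⟩
        rw [hw]
      · rintro ⟨hne, h⟩
        refine ⟨h, fun hs => hne ?_⟩
        rwa [Sym2.congr_right] at hs
    rw [SimpleGraph.degree, h1, card_erase_of_mem (by simpa using he), ← SimpleGraph.degree,
      hreg x]
  -- the two color classes inside C
  set A : Finset V := C.filter (fun v => b v = b x) with hA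
  set B : Finset V := C.filter (fun v => b v ≠ b x) with hB
  have hxA : x ∈ A := by simp [hA, hxC]
  -- double counting
  have hswap : ∀ u v : V, (u ∈ A ∧ H.Adj u v) ↔ (v ∈ B ∧ H.Adj u v) := by
    intro u v
    constructor
    · rintro ⟨huA, huv⟩
      refine ⟨?_, huv⟩
      rw [hA, mem_filter] at huA
      rw [hB, mem_filter]
      refine ⟨(hCadj u v huv).1 huA.1, ?_⟩
      have hne := hb ((hHadj u v).1 huv).1
      have := huA.2
      cases hbu : b u <;> cases hbv : b v <;> cases hbx : b x <;> simp_all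
    · rintro ⟨hvB, huv⟩
      refine ⟨?_, huv⟩
      rw [hB, mem_filter] at hvB
      rw [hA, mem_filter]
      refine ⟨(hCadj u v huv).2 hvB.1, ?_⟩
      have hne := hb ((hHadj u v).1 huv).1
      have := hvB.2
      cases hbu : b u <;> cases hbv : b v <;> cases hbx : b x <;> simp_all
  have hsum : ∑ u ∈ A, H.degree u = ∑ v ∈ B, H.degree v := by
    have hd : ∀ u : V, H.degree u = ∑ v ∈ univ, (if H.Adj u v then 1 else 0) := by
      intro u
      rw [SimpleGraph.degree, SimpleGraph.neighborFinset_eq_filter, Finset.card_filter]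
    calc ∑ u ∈ A, H.degree u
        = ∑ u ∈ univ, ∑ v ∈ univ, (if u ∈ A ∧ H.Adj u v then 1 else 0) := by
          rw [← Finset.sum_filter_add_sum_filter_not univ (fun u => u ∈ A)]
          have h2 : ∑ u ∈ univ.filter (fun u => ¬ u ∈ A), ∑ v ∈ univ,
              (if u ∈ A ∧ H.Adj u v then 1 else 0) = 0 := by
            apply Finset.sum_eq_zero
            intro u hu
            rw [mem_filter] at hu
            apply Finset.sum_eq_zero
            intro v _
            simp [hu.2]
          rw [h2, add_zero]
          have h3 : univ.filter (fun u => u ∈ A) = A := by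
            ext u; simp
          rw [h3]
          apply Finset.sum_congr rfl
          intro u hu
          rw [hd u]
          apply Finset.sum_congr rfl
          intro v _
          simp [hu]
      _ = ∑ u ∈ univ, ∑ v ∈ univ, (if v ∈ B ∧ H.Adj u v then 1 else 0) := by
          apply Finset.sum_congr rfl; intro u _
          apply Finset.sum_congr rfl; intro v _
          rw [if_congr (hswap u v) rfl rfl]
      _ = ∑ v ∈ univ, ∑ u ∈ univ, (if v ∈ B ∧ H.Adj u v then 1 else 0) := by
          rw [Finset.sum_comm]
      _ = ∑ v ∈ B, H.degree v := by
          rw [← Finset.sum_filter_add_sum_filter_not univ (fun v => v ∈ B)]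
          have h2 : ∑ v ∈ univ.filter (fun v => ¬ v ∈ B), ∑ u ∈ univ,
              (if v ∈ B ∧ H.Adj u v then 1 else 0) = 0 := by
            apply Finset.sum_eq_zero
            intro v hv
            rw [mem_filter] at hv
            apply Finset.sum_eq_zero
            intro u _
            simp [hv.2]
          rw [h2, add_zero]
          have h3 : univ.filter (fun v => v ∈ B) = B := by
            ext v; simp
          rw [h3]
          apply Finset.sum_congr rfl
          intro v hv
          rw [hd v]
          apply Finset.sum_congr rfl
          intro u _
          simp only [hv, true_and]
          rw [if_congr ⟨fun h => h.symm, fun h => h.symm⟩ rfl rfl]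
  -- compute both sides
  have hAval : ∑ u ∈ A, H.degree u = k * (A.card - 1) + (k - 1) := by
    have h1 : ∑ u ∈ A.erase x, H.degree u = k * (A.card - 1) := by
      rw [Finset.sum_congr rfl (fun u hu => ?_), Finset.sum_const,
        Finset.card_erase_of_mem hxA, smul_eq_mul, mul_comm]
      rw [mem_erase] at hu
      have huC : u ∈ C := (Finset.mem_filter.1 (hA ▸ hu.2)).1
      exact hdeg u hu.1 (fun h => hyC (h ▸ huC))
    rw [← Finset.sum_erase_add A _ hxA, h1, hdegx]
  have hBval : ∑ v ∈ B, H.degree v = k * B.card := by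
    rw [Finset.sum_congr rfl (fun v hv => ?_), Finset.sum_const, smul_eq_mul, mul_comm]
    rw [hB, mem_filter] at hv
    have hvx : v ≠ x := fun h => hv.2 (by rw [h])
    have hvy : v ≠ y := fun h => hyC (h ▸ hv.1)
    exact hdeg v hvx hvy
  rw [hAval, hBval] at hsum
  -- derive the contradiction : k * a = k * c + 1 with k ≥ 2
  have hA1 : 1 ≤ A.card := Finset.card_pos.2 ⟨x, hxA⟩
  obtain ⟨a', ha'⟩ : ∃ a', A.card = a' + 1 := ⟨A.card - 1, by omega⟩
  rw [ha', Nat.add_sub_cancel] at hsum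
  -- hsum : k * a' + (k - 1) = k * B.card
  have hlt : a' < B.card := by
    have h1 : k * a' < k * B.card := by omega
    exact lt_of_mul_lt_mul_left h1 (Nat.zero_le k)
  have h2 : k * (a' + 1) ≤ k * B.card := Nat.mul_le_mul_left k hlt
  rw [Nat.mul_add, Nat.mul_one] at h2
  omega
end

section
/- Let G be a connected cubic (3-regular) bipartite simple graph, and let e' = {u', w'} and e'' = {u'', w''} be two edges of G sharing no endpoint such that deleting e' and e'' disconnects G into exactly two connected components, with vertex sets V1 containing u' and u'' and V2 containing w' and w''. Assume that u' and u'' are not adjacent in G. Let H1 be the graph obtained from the induced subgraph of G on V1 by adding the edge {u', u''}. Then H1 is cubic, H1 is bipartite, and H1 has strictly fewer vertices than G. -/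
/-!
Since `V1` and `V2` are each connected in `G - e' - e''` while `u'` and `w'` are not, the only
edges leaving `V1` are `e'` and `e''`. So every vertex of `V1` other than `u'`, `u''` keeps its
three neighbours, while `u'` and `u''` each lose one and regain one through the new edge.
The colouring of `G` stays proper on `H1` once `u'` and `u''` have different colours. If both had
colour `k`, counting the edges inside `V1` from the `k`-side would give `3 * #(k-side) - 2` and
from the other side `3 * #(other side)`, which is impossible modulo 3.
-/

open Finset

namespace SimpleGraph

variable {V W : Type*} {G : SimpleGraph V}

theorem neighborSet_sup_edge_left (H : SimpleGraph W) {a b : W} (hab : a ≠ b) :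
    (H ⊔ edge a b).neighborSet a = insert b (H.neighborSet a) := by
  ext w
  simp only [mem_neighborSet, sup_adj, edge_adj, Set.mem_insert_iff]
  grind

theorem neighborSet_sup_edge_of_ne_of_ne (H : SimpleGraph W) {a b v : W} (ha : v ≠ a)
    (hb : v ≠ b) : (H ⊔ edge a b).neighborSet v = H.neighborSet v := by
  ext w
  simp [edge_adj, ha, hb]

theorem ncard_neighborSet_sup_edge [DecidableEq W] (H : SimpleGraph W) [H.LocallyFinite]
    {a b : W} (hab : a ≠ b) (hadj : ¬H.Adj a b) (v : W) :
    ((H ⊔ edge a b).neighborSet v).ncard =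
      (H.neighborSet v).ncard + if v = a ∨ v = b then 1 else 0 := by
  by_cases hva : v = a
  · subst hva
    rw [neighborSet_sup_edge_left H hab, Set.ncard_insert_of_notMem (s := H.neighborSet v) hadj]
    simp
  by_cases hvb : v = b
  · subst hvb
    rw [edge_comm, neighborSet_sup_edge_left H (Ne.symm hab),
      Set.ncard_insert_of_notMem (s := H.neighborSet v) fun h => hadj h.symm]
    simp
  rw [neighborSet_sup_edge_of_ne_of_ne H hva hvb]
  simp [hva, hvb]

theorem sum_ncard_neighborSet_inter_eq {c : V → Bool} (hc : ∀ ⦃x y⦄, G.Adj x y → c x ≠ c y)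
    (S : Finset V) (k : Bool) :
    ∑ x ∈ S with c x = k, (G.neighborSet x ∩ S).ncard =
      ∑ x ∈ S with c x ≠ k, (G.neighborSet x ∩ S).ncard := by
  classical
  have hA : ∀ x ∈ S.filter (c · = k), G.neighborSet x ∩ S =
      ↑((S.filter (c · ≠ k)).bipartiteAbove G.Adj x) := by
    intro x hx
    ext y
    simp only [mem_filter] at hx
    simp only [Set.mem_inter_iff, mem_neighborSet, mem_coe, bipartiteAbove, mem_filter]
    exact ⟨fun ⟨hxy, hy⟩ => ⟨⟨hy, hx.2 ▸ (hc hxy).symm⟩, hxy⟩, fun h => ⟨h.2, h.1.1⟩⟩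
  have hB : ∀ y ∈ S.filter (c · ≠ k), G.neighborSet y ∩ S =
      ↑((S.filter (c · = k)).bipartiteBelow G.Adj y) := by
    intro y hy
    ext x
    simp only [mem_filter] at hy
    simp only [Set.mem_inter_iff, mem_neighborSet, mem_coe, bipartiteBelow, mem_filter]
    refine ⟨fun ⟨hyx, hx⟩ => ⟨⟨hx, ?_⟩, hyx.symm⟩, fun h => ⟨h.2.symm, h.1.1⟩⟩
    have := hc hyx
    cases hcx : c x <;> cases hcy : c y <;> cases k <;> simp_all
  rw [sum_congr rfl fun x hx => congrArg Set.ncard (hA x hx),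
    sum_congr rfl fun y hy => congrArg Set.ncard (hB y hy)]
  simp only [Set.ncard_coe_finset]
  exact sum_card_bipartiteAbove_eq_sum_card_bipartiteBelow G.Adj

theorem ncard_neighborSet_induce (s : Set V) (v : s) :
    ((G.induce s).neighborSet v).ncard = (G.neighborSet v ∩ s).ncard := by
  rw [neighborSet_induce, ← Set.ncard_image_of_injective _ Subtype.val_injective,
    Set.image_preimage_eq_inter_range, Subtype.range_coe]

theorem ncard_neighborSet_eq_degree [G.LocallyFinite] (v : V) :
    (G.neighborSet v).ncard = G.degree v := by
  rw [Set.ncard_eq_toFinset_card', Set.toFinset_card, card_neighborSet_eq_degree]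

theorem ne_of_adj_induce_sup_edge {s : Set V} {a b : s} {c : V → Bool}
    (hc : ∀ ⦃x y⦄, G.Adj x y → c x ≠ c y) (hab : c a ≠ c b) ⦃x y : s⦄
    (hxy : (G.induce s ⊔ edge a b).Adj x y) : c x ≠ c y := by
  rcases hxy with hxy | hxy
  · exact hc hxy
  · rcases (edge_adj _ _ _ _).1 hxy with ⟨⟨rfl, rfl⟩ | ⟨rfl, rfl⟩, -⟩
    exacts [hab, hab.symm]

theorem mem_of_adj_of_not_reachable_deleteEdges {E : Set (Sym2 V)} {a c x y : V}
    (hac : ¬(G.deleteEdges E).Reachable a c) (hax : (G.deleteEdges E).Reachable a x)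
    (hyc : (G.deleteEdges E).Reachable y c) (hxy : G.Adj x y) : s(x, y) ∈ E := by
  by_contra hxyE
  exact hac (hax.trans ((deleteEdges_adj.2 ⟨hxy, hxyE⟩).reachable.trans hyc))

section TwoEdgeCut

variable {S : Finset V} {u₁ w₁ u₂ w₂ : V}

theorem eq_and_eq_or_eq_and_eq_of_adj_of_not_reachable
    (hsep : ¬(G.deleteEdges {s(u₁, w₁), s(u₂, w₂)}).Reachable u₁ w₁)
    (hS : ∀ x ∈ S, (G.deleteEdges {s(u₁, w₁), s(u₂, w₂)}).Reachable u₁ x)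
    (hT : ∀ y ∉ S, (G.deleteEdges {s(u₁, w₁), s(u₂, w₂)}).Reachable y w₁)
    (hw₁ : w₁ ∉ S) (hw₂ : w₂ ∉ S) {x y : V} (hx : x ∈ S) (hy : y ∉ S) (hxy : G.Adj x y) :
    x = u₁ ∧ y = w₁ ∨ x = u₂ ∧ y = w₂ := by
  have hmem := mem_of_adj_of_not_reachable_deleteEdges hsep (hS x hx) (hT y hy) hxy
  simp only [Set.mem_insert_iff, Set.mem_singleton_iff, Sym2.eq_iff] at hmem
  grind

theorem neighborSet_diff_eq_singleton
    (hcut : ∀ x ∈ S, ∀ y ∉ S, G.Adj x y → x = u₁ ∧ y = w₁ ∨ x = u₂ ∧ y = w₂)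
    (h₁ : G.Adj u₁ w₁) (hw₁ : w₁ ∉ S) (hu₁ : u₁ ∈ S) (hu : u₁ ≠ u₂) :
    G.neighborSet u₁ \ S = {w₁} := by
  ext y
  refine ⟨fun ⟨hy, hyS⟩ => ?_, fun hy => ?_⟩
  · rcases hcut u₁ hu₁ y hyS hy with ⟨-, rfl⟩ | ⟨h, -⟩
    exacts [rfl, absurd h hu]
  · rw [Set.mem_singleton_iff.1 hy]
    exact ⟨h₁, hw₁⟩

theorem neighborSet_subset_of_ne_of_ne
    (hcut : ∀ x ∈ S, ∀ y ∉ S, G.Adj x y → x = u₁ ∧ y = w₁ ∨ x = u₂ ∧ y = w₂)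
    {x : V} (hx : x ∈ S) (h₁ : x ≠ u₁) (h₂ : x ≠ u₂) : G.neighborSet x ⊆ S := fun y hy => by
  by_contra hyS
  rcases hcut x hx y hyS hy with ⟨h, -⟩ | ⟨h, -⟩
  exacts [h₁ h, h₂ h]

theorem IsRegularOfDegree.ncard_neighborSet_inter_add_ite [DecidableEq V] [G.LocallyFinite]
    {d : ℕ} (hreg : G.IsRegularOfDegree d)
    (hcut : ∀ x ∈ S, ∀ y ∉ S, G.Adj x y → x = u₁ ∧ y = w₁ ∨ x = u₂ ∧ y = w₂)
    (h₁ : G.Adj u₁ w₁) (h₂ : G.Adj u₂ w₂) (hw₁ : w₁ ∉ S) (hw₂ : w₂ ∉ S) (hu : u₁ ≠ u₂)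
    {x : V} (hx : x ∈ S) :
    (G.neighborSet x ∩ S).ncard + (if x = u₁ ∨ x = u₂ then 1 else 0) = d := by
  rw [← hreg x, ← ncard_neighborSet_eq_degree,
    ← Set.ncard_inter_add_ncard_sdiff_eq_ncard (G.neighborSet x) S]
  congr 1
  split_ifs with hx'
  · rcases hx' with rfl | rfl
    · rw [neighborSet_diff_eq_singleton hcut h₁ hw₁ hx hu, Set.ncard_singleton]
    · rw [neighborSet_diff_eq_singleton (fun x hx y hy hxy => (hcut x hx y hy hxy).symm)
        h₂ hw₂ hx hu.symm, Set.ncard_singleton]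
  · push Not at hx'
    rw [Set.sdiff_eq_empty.2 (neighborSet_subset_of_ne_of_ne hcut hx hx'.1 hx'.2),
      Set.ncard_empty]

theorem ncard_neighborSet_induce_sup_edge_eq [DecidableEq V] {d : ℕ}
    (hdeg : ∀ x ∈ S, (G.neighborSet x ∩ S).ncard + (if x = u₁ ∨ x = u₂ then 1 else 0) = d)
    (hu₁ : u₁ ∈ S) (hu₂ : u₂ ∈ S) (hu : u₁ ≠ u₂) (hadj : ¬G.Adj u₁ u₂) (v : S) :
    ((G.induce (S : Set V) ⊔ edge ⟨u₁, hu₁⟩ ⟨u₂, hu₂⟩).neighborSet v).ncard = d := by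
  classical
  rw [ncard_neighborSet_sup_edge _ (fun h => hu (congrArg Subtype.val h)) hadj,
    ncard_neighborSet_induce, ← hdeg v v.2]
  simp only [Subtype.ext_iff]

theorem ne_of_ncard_neighborSet_inter_add_ite [DecidableEq V] {c : V → Bool}
    (hc : ∀ ⦃x y⦄, G.Adj x y → c x ≠ c y) {d : ℕ} (hd : 2 < d)
    (hdeg : ∀ x ∈ S, (G.neighborSet x ∩ S).ncard + (if x = u₁ ∨ x = u₂ then 1 else 0) = d)
    (hu₁ : u₁ ∈ S) (hu₂ : u₂ ∈ S) (hu : u₁ ≠ u₂) : c u₁ ≠ c u₂ := by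
  intro hcu
  have hsum (T : Finset V) (hT : T ⊆ S) : ∑ x ∈ T, (G.neighborSet x ∩ S).ncard +
      ∑ x ∈ T, (if x = u₁ ∨ x = u₂ then 1 else 0) = d * #T := by
    rw [← sum_add_distrib, mul_comm, ← smul_eq_mul, ← sum_const]
    exact sum_congr rfl fun x hx => hdeg x (hT hx)
  have hpair : ∑ x ∈ S with c x = c u₁, (if x = u₁ ∨ x = u₂ then 1 else 0) = 2 := by
    rw [sum_boole, Nat.cast_id, ← card_pair hu]
    congr 1
    ext x
    simp only [mem_filter, mem_insert, mem_singleton]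
    grind
  have hnone : ∑ x ∈ S with c x ≠ c u₁, (if x = u₁ ∨ x = u₂ then 1 else 0) = 0 :=
    sum_eq_zero fun x hx => if_neg (by grind)
  have h₁ := hsum _ (filter_subset (c · = c u₁) S)
  have h₂ := hsum _ (filter_subset (c · ≠ c u₁) S)
  rw [hpair, sum_ncard_neighborSet_inter_eq hc S (c u₁)] at h₁
  rw [hnone, add_zero] at h₂
  rw [h₂] at h₁
  have hd2 : d ∣ 2 := (Nat.dvd_add_right (dvd_mul_right d _)).1 (h₁ ▸ dvd_mul_right d _)
  exact absurd (Nat.le_of_dvd two_pos hd2) (by omega)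

end TwoEdgeCut

end SimpleGraph

theorem smaller_half_is_cubic_bipartite_general
    {V : Type*} [Fintype V] [DecidableEq V]
    (G : SimpleGraph V) [DecidableRel G.Adj]
    (hreg : G.IsRegularOfDegree 3)
    (b : V → Bool) (hb : ∀ ⦃x y : V⦄, G.Adj x y → b x ≠ b y)
    (u' w' u'' w'' : V)
    (he' : G.Adj u' w') (he'' : G.Adj u'' w'')
    (hshare : ({u', w'} : Set V) ∩ ({u'', w''} : Set V) = ∅)
    (V1 V2 : Finset V)
    (hu' : u' ∈ V1) (hu'' : u'' ∈ V1) (hw' : w' ∈ V2) (hw'' : w'' ∈ V2)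
    (hV12 : Disjoint V1 V2) (hcover : V1 ∪ V2 = Finset.univ)
    (hV1conn : ∀ x ∈ V1, ∀ y ∈ V1,
      (G.deleteEdges {s(u', w'), s(u'', w'')}).Reachable x y)
    (hV2conn : ∀ x ∈ V2, ∀ y ∈ V2,
      (G.deleteEdges {s(u', w'), s(u'', w'')}).Reachable x y)
    (hsep : ¬ (G.deleteEdges {s(u', w'), s(u'', w'')}).Reachable u' w')
    (hnadj : ¬ G.Adj u' u'')
    (H1 : SimpleGraph ↥(V1 : Set V))
    (hH1 : H1 = G.induce (V1 : Set V) ⊔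
      SimpleGraph.fromEdgeSet {s((⟨u', hu'⟩ : ↥(V1 : Set V)), (⟨u'', hu''⟩ : ↥(V1 : Set V)))}) :
    (∀ v : ↥(V1 : Set V), (H1.neighborSet v).ncard = 3) ∧
    (∃ b1 : ↥(V1 : Set V) → Bool, ∀ ⦃x y : ↥(V1 : Set V)⦄, H1.Adj x y → b1 x ≠ b1 y) ∧
    V1.card < Fintype.card V := by
  have hu : u' ≠ u'' := fun h => Set.eq_empty_iff_forall_notMem.1 hshare u' (by simp [h])
  have hw'V1 : w' ∉ V1 := Finset.disjoint_right.1 hV12 hw'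
  have hw''V1 : w'' ∉ V1 := Finset.disjoint_right.1 hV12 hw''
  have hV2 : ∀ y ∉ V1, y ∈ V2 := fun y hy =>
    (Finset.mem_union.1 (hcover ▸ Finset.mem_univ y)).resolve_left hy
  have hcut : ∀ x ∈ V1, ∀ y ∉ V1, G.Adj x y → x = u' ∧ y = w' ∨ x = u'' ∧ y = w'' :=
    fun x hx y hy => SimpleGraph.eq_and_eq_or_eq_and_eq_of_adj_of_not_reachable hsep
      (hV1conn u' hu') (fun y hy => hV2conn y (hV2 y hy) w' hw') hw'V1 hw''V1 hx hy
  have hdeg : ∀ x ∈ V1,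
      (G.neighborSet x ∩ V1).ncard + (if x = u' ∨ x = u'' then 1 else 0) = 3 :=
    fun x hx => hreg.ncard_neighborSet_inter_add_ite hcut he' he'' hw'V1 hw''V1 hu hx
  subst hH1
  exact ⟨SimpleGraph.ncard_neighborSet_induce_sup_edge_eq hdeg hu' hu'' hu hnadj,
    ⟨fun x => b x, SimpleGraph.ne_of_adj_induce_sup_edge hb
      (SimpleGraph.ne_of_ncard_neighborSet_inter_add_ite hb (by norm_num) hdeg hu' hu'' hu)⟩,
    Finset.card_lt_univ_of_notMem hw'V1⟩

/-- Let `G` be a connected cubic bipartite simple graph, and let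
`e' = {u', w'}`, `e'' = {u'', w''}` be disjoint edges whose deletion splits `G` into
exactly two connected components, with vertex sets `V1 ∋ u', u''` and `V2 ∋ w', w''`.
If `u'` and `u''` are not adjacent in `G`, then the graph `H1` obtained from the
induced subgraph of `G` on `V1` by adding the edge `{u', u''}` is cubic, bipartite,
and has strictly fewer vertices than `G`. -/
theorem smaller_half_is_cubic_bipartite
    {V : Type*} [Fintype V] [DecidableEq V]
    (G : SimpleGraph V) [DecidableRel G.Adj]
    (hconn : G.Connected) (hreg : G.IsRegularOfDegree 3)
    (b : V → Bool) (hb : ∀ ⦃x y : V⦄, G.Adj x y → b x ≠ b y)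
    (u' w' u'' w'' : V)
    (he' : G.Adj u' w') (he'' : G.Adj u'' w'')
    (hshare : ({u', w'} : Set V) ∩ ({u'', w''} : Set V) = ∅)
    (V1 V2 : Finset V)
    (hu' : u' ∈ V1) (hu'' : u'' ∈ V1) (hw' : w' ∈ V2) (hw'' : w'' ∈ V2)
    (hV12 : Disjoint V1 V2) (hcover : V1 ∪ V2 = Finset.univ)
    (hV1conn : ∀ x ∈ V1, ∀ y ∈ V1,
      (G.deleteEdges {s(u', w'), s(u'', w'')}).Reachable x y)
    (hV2conn : ∀ x ∈ V2, ∀ y ∈ V2,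
      (G.deleteEdges {s(u', w'), s(u'', w'')}).Reachable x y)
    (hsep : ¬ (G.deleteEdges {s(u', w'), s(u'', w'')}).Reachable u' w')
    (hnadj : ¬ G.Adj u' u'')
    (H1 : SimpleGraph ↥(V1 : Set V))
    (hH1 : H1 = G.induce (V1 : Set V) ⊔
      SimpleGraph.fromEdgeSet {s((⟨u', hu'⟩ : ↥(V1 : Set V)), (⟨u'', hu''⟩ : ↥(V1 : Set V)))}) :
    (∀ v : ↥(V1 : Set V), (H1.neighborSet v).ncard = 3) ∧
    (∃ b1 : ↥(V1 : Set V) → Bool, ∀ ⦃x y : ↥(V1 : Set V)⦄, H1.Adj x y → b1 x ≠ b1 y) ∧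
    V1.card < Fintype.card V :=
  smaller_half_is_cubic_bipartite_general G hreg b hb u' w' u'' w'' he' he'' hshare V1 V2 hu' hu''
    hw' hw'' hV12 hcover hV1conn hV2conn hsep hnadj H1 hH1
end

section
/- Let G be a connected cubic (3-regular) bipartite simple graph, and let e' = {u', w'} and e'' = {u'', w''} be two edges of G sharing no endpoint such that deleting e' and e'' disconnects G into exactly two connected components, with vertex sets V1 containing u' and u'' and V2 containing w' and w''. Assume u' and u'' are not adjacent in G and w' and w'' are not adjacent in G. Let H1 be the induced subgraph of G on V1 together with the added edge e1 = {u', u''}, and let H2 be the induced subgraph of G on V2 together with the added edge e2 = {w', w''}. Suppose c1 is a proper edge 3-coloring of H1 and c2 is a proper edge 3-coloring of H2, using the same three colors, with c1(e1) = c2(e2) = γ. Then the coloring c of the edges of G defined by c = c1 on edges inside V1, c = c2 on edges inside V2, and c(e') = c(e'') = γ, is a proper edge 3-coloring of G. -/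
private lemma aux_side {V : Type*} [DecidableEq V] (G : SimpleGraph V)
    (u' w' u'' w'' : V)
    (hn1 : u' ≠ u'')
    (V1 : Finset V)
    (hu' : u' ∈ V1) (hu'' : u'' ∈ V1) (hw'1 : w' ∉ V1) (hw''1 : w'' ∉ V1)
    (hcross : ∀ x y : V, G.Adj x y → x ∈ V1 → y ∉ V1 →
      s(x, y) = s(u', w') ∨ s(x, y) = s(u'', w''))
    (hnadj1 : ¬ G.Adj u' u'')
    (H1 : SimpleGraph ↥(V1 : Set V))
    (hH1 : H1 = G.induce (V1 : Set V) ⊔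
      SimpleGraph.fromEdgeSet {s((⟨u', hu'⟩ : ↥(V1 : Set V)), (⟨u'', hu''⟩ : ↥(V1 : Set V)))})
    (c1 : Sym2 ↥(V1 : Set V) → Fin 3)
    (hc1 : ∀ ⦃x y z : ↥(V1 : Set V)⦄, H1.Adj x y → H1.Adj x z → y ≠ z →
      c1 s(x, y) ≠ c1 s(x, z))
    (γ : Fin 3)
    (hγ1 : c1 s(⟨u', hu'⟩, ⟨u'', hu''⟩) = γ)
    (c : Sym2 V → Fin 3)
    (hcV1 : ∀ (x y : V) (hx : x ∈ V1) (hy : y ∈ V1), G.Adj x y →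
      c s(x, y) = c1 s(⟨x, hx⟩, ⟨y, hy⟩))
    (hce' : c s(u', w') = γ) (hce'' : c s(u'', w'') = γ)
    (x y z : V) (hx : x ∈ V1) (hxy : G.Adj x y) (hxz : G.Adj x z) (hyz : y ≠ z) :
    c s(x, y) ≠ c s(x, z) := by
  have hind : ∀ (a b : V) (ha : a ∈ V1) (hb : b ∈ V1), G.Adj a b →
      H1.Adj ⟨a, ha⟩ ⟨b, hb⟩ := by
    intro a b ha hb h
    rw [hH1]
    exact Or.inl h
  have hedge : H1.Adj ⟨u', hu'⟩ ⟨u'', hu''⟩ := by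
    rw [hH1]
    right
    rw [SimpleGraph.fromEdgeSet_adj]
    exact ⟨Set.mem_singleton _, by simpa [Subtype.ext_iff] using hn1⟩
  have key : ∀ y z : V, G.Adj x y → G.Adj x z → y ∈ V1 → z ∉ V1 →
      c s(x, y) ≠ c s(x, z) := by
    intro y z hxy hxz hy hz
    rcases hcross x z hxz hx hz with h | h
    · rcases Sym2.eq_iff.mp h with ⟨hx1, hz1⟩ | ⟨hx1, _⟩
      · subst hx1; subst hz1
        rw [h, hce', hcV1 x y hx hy hxy, ← hγ1]
        have hne : (⟨y, hy⟩ : ↥(V1 : Set V)) ≠ ⟨u'', hu''⟩ := by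
          intro hq
          exact hnadj1 (by
            have : y = u'' := congrArg Subtype.val hq
            exact this ▸ hxy)
        exact hc1 (hind x y hx hy hxy) hedge hne
      · exact absurd (hx1 ▸ hx) hw'1
    · rcases Sym2.eq_iff.mp h with ⟨hx1, hz1⟩ | ⟨hx1, _⟩
      · subst hx1; subst hz1
        rw [h, hce'', hcV1 x y hx hy hxy, ← hγ1, Sym2.eq_swap (a := (⟨u', hu'⟩ : ↥(V1 : Set V)))]
        have hne : (⟨y, hy⟩ : ↥(V1 : Set V)) ≠ ⟨u', hu'⟩ := by
          intro hq
          exact hnadj1 (by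
            have : y = u' := congrArg Subtype.val hq
            exact (this ▸ hxy).symm)
        exact hc1 (hind x y hx hy hxy) hedge.symm hne
      · exact absurd (hx1 ▸ hx) hw''1
  by_cases hy : y ∈ V1 <;> by_cases hz : z ∈ V1
  · rw [hcV1 x y hx hy hxy, hcV1 x z hx hz hxz]
    exact hc1 (hind x y hx hy hxy) (hind x z hx hz hxz)
      (fun hq => hyz (congrArg Subtype.val hq))
  · exact key y z hxy hxz hy hz
  · exact (key z y hxz hxy hz hy).symm
  · exfalso
    rcases hcross x y hxy hx hy with h1 | h1 <;>
      rcases hcross x z hxz hx hz with h2 | h2 <;>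
      rcases Sym2.eq_iff.mp h1 with ⟨ha1, hb1⟩ | ⟨ha1, _⟩ <;>
      rcases Sym2.eq_iff.mp h2 with ⟨ha2, hb2⟩ | ⟨ha2, _⟩
    all_goals first
      | exact hw'1 (ha1 ▸ hx)
      | exact hw''1 (ha1 ▸ hx)
      | exact hw'1 (ha2 ▸ hx)
      | exact hw''1 (ha2 ▸ hx)
      | exact hyz (hb1.trans hb2.symm)
      | exact hn1 (ha1.symm.trans ha2)
      | exact hn1 (ha2.symm.trans ha1)

/-- With `G`, the two-edge cutset `{e', e''}` and the two halves
`H1 = G[V1] + u'u''`, `H2 = G[V2] + w'w''` as in the main construction, any proper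
edge 3-colorings `c1` of `H1` and `c2` of `H2` with `c1(u'u'') = c2(w'w'') = γ`
combine (keeping `c1` inside `V1`, `c2` inside `V2`, and color `γ` on `e'`, `e''`)
to a proper edge 3-coloring of `G`. -/
theorem combined_coloring_is_proper
    {V : Type*} [Fintype V] [DecidableEq V]
    (G : SimpleGraph V) [DecidableRel G.Adj]
    (hconn : G.Connected) (hreg : G.IsRegularOfDegree 3)
    (b : V → Bool) (hb : ∀ ⦃x y : V⦄, G.Adj x y → b x ≠ b y)
    (u' w' u'' w'' : V)
    (he' : G.Adj u' w') (he'' : G.Adj u'' w'')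
    (hshare : ({u', w'} : Set V) ∩ ({u'', w''} : Set V) = ∅)
    (V1 V2 : Finset V)
    (hu' : u' ∈ V1) (hu'' : u'' ∈ V1) (hw' : w' ∈ V2) (hw'' : w'' ∈ V2)
    (hV12 : Disjoint V1 V2) (hcover : V1 ∪ V2 = Finset.univ)
    (hV1conn : ∀ x ∈ V1, ∀ y ∈ V1,
      (G.deleteEdges {s(u', w'), s(u'', w'')}).Reachable x y)
    (hV2conn : ∀ x ∈ V2, ∀ y ∈ V2,
      (G.deleteEdges {s(u', w'), s(u'', w'')}).Reachable x y)
    (hsep : ¬ (G.deleteEdges {s(u', w'), s(u'', w'')}).Reachable u' w')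
    (hnadj1 : ¬ G.Adj u' u'') (hnadj2 : ¬ G.Adj w' w'')
    (H1 : SimpleGraph ↥(V1 : Set V))
    (hH1 : H1 = G.induce (V1 : Set V) ⊔
      SimpleGraph.fromEdgeSet {s((⟨u', hu'⟩ : ↥(V1 : Set V)), (⟨u'', hu''⟩ : ↥(V1 : Set V)))})
    (H2 : SimpleGraph ↥(V2 : Set V))
    (hH2 : H2 = G.induce (V2 : Set V) ⊔
      SimpleGraph.fromEdgeSet {s((⟨w', hw'⟩ : ↥(V2 : Set V)), (⟨w'', hw''⟩ : ↥(V2 : Set V)))})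
    (c1 : Sym2 ↥(V1 : Set V) → Fin 3)
    (hc1 : ∀ ⦃x y z : ↥(V1 : Set V)⦄, H1.Adj x y → H1.Adj x z → y ≠ z →
      c1 s(x, y) ≠ c1 s(x, z))
    (c2 : Sym2 ↥(V2 : Set V) → Fin 3)
    (hc2 : ∀ ⦃x y z : ↥(V2 : Set V)⦄, H2.Adj x y → H2.Adj x z → y ≠ z →
      c2 s(x, y) ≠ c2 s(x, z))
    (γ : Fin 3)
    (hγ1 : c1 s(⟨u', hu'⟩, ⟨u'', hu''⟩) = γ)
    (hγ2 : c2 s(⟨w', hw'⟩, ⟨w'', hw''⟩) = γ)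
    (c : Sym2 V → Fin 3)
    (hcV1 : ∀ (x y : V) (hx : x ∈ V1) (hy : y ∈ V1), G.Adj x y →
      c s(x, y) = c1 s(⟨x, hx⟩, ⟨y, hy⟩))
    (hcV2 : ∀ (x y : V) (hx : x ∈ V2) (hy : y ∈ V2), G.Adj x y →
      c s(x, y) = c2 s(⟨x, hx⟩, ⟨y, hy⟩))
    (hce' : c s(u', w') = γ) (hce'' : c s(u'', w'') = γ) :
    ∀ ⦃x y z : V⦄, G.Adj x y → G.Adj x z → y ≠ z → c s(x, y) ≠ c s(x, z) := by
  have hempty := Set.eq_empty_iff_forall_notMem.mp hshare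
  have hn1 : u' ≠ u'' := fun h => hempty u' ⟨by simp, by simp [h]⟩
  have hn2 : w' ≠ w'' := fun h => hempty w' ⟨by simp, by simp [h]⟩
  -- memberships
  have hw'1 : w' ∉ V1 := fun h => (Finset.disjoint_left.mp hV12) h hw'
  have hw''1 : w'' ∉ V1 := fun h => (Finset.disjoint_left.mp hV12) h hw''
  have hu'2 : u' ∉ V2 := fun h => (Finset.disjoint_left.mp hV12) hu' h
  have hu''2 : u'' ∉ V2 := fun h => (Finset.disjoint_left.mp hV12) hu'' h
  have hmem : ∀ a : V, a ∉ V1 → a ∈ V2 := by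
    intro a ha
    have : a ∈ V1 ∪ V2 := hcover ▸ Finset.mem_univ a
    rcases Finset.mem_union.mp this with h | h
    · exact absurd h ha
    · exact h
  have hmem' : ∀ a : V, a ∉ V2 → a ∈ V1 := by
    intro a ha
    have : a ∈ V1 ∪ V2 := hcover ▸ Finset.mem_univ a
    rcases Finset.mem_union.mp this with h | h
    · exact h
    · exact absurd h ha
  have hcross1 : ∀ x y : V, G.Adj x y → x ∈ V1 → y ∉ V1 →
      s(x, y) = s(u', w') ∨ s(x, y) = s(u'', w'') := by
    intro x y hadj hx1 hy1
    by_contra hcon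
    push_neg at hcon
    have hdel : (G.deleteEdges {s(u', w'), s(u'', w'')}).Adj x y := by
      rw [SimpleGraph.deleteEdges_adj]
      refine ⟨hadj, ?_⟩
      simp only [Set.mem_insert_iff, Set.mem_singleton_iff]
      tauto
    exact hsep ((hV1conn u' hu' x hx1).trans
      (hdel.reachable.trans (hV2conn y (hmem y hy1) w' hw')))
  have hcross2 : ∀ x y : V, G.Adj x y → x ∈ V2 → y ∉ V2 →
      s(x, y) = s(w', u') ∨ s(x, y) = s(w'', u'') := by
    intro x y hadj hx2 hy2
    by_contra hcon
    push_neg at hcon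
    rw [Sym2.eq_swap (a := w') (b := u'), Sym2.eq_swap (a := w'') (b := u'')] at hcon
    have hdel : (G.deleteEdges {s(u', w'), s(u'', w'')}).Adj x y := by
      rw [SimpleGraph.deleteEdges_adj]
      refine ⟨hadj, ?_⟩
      simp only [Set.mem_insert_iff, Set.mem_singleton_iff]
      tauto
    exact hsep (((hV1conn u' hu' y (hmem' y hy2)).trans
      (hdel.symm.reachable.trans (hV2conn x hx2 w' hw'))))
  intro x y z hxy hxz hyz
  by_cases hx : x ∈ V1
  · exact aux_side G u' w' u'' w'' hn1 V1 hu' hu'' hw'1 hw''1 hcross1 hnadj1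
      H1 hH1 c1 hc1 γ hγ1 c hcV1 hce' hce'' x y z hx hxy hxz hyz
  · exact aux_side G w' u' w'' u'' hn2 V2 hw' hw'' hu'2 hu''2 hcross2 hnadj2
      H2 hH2 c2 hc2 γ hγ2 c hcV2 (by rw [Sym2.eq_swap]; exact hce')
      (by rw [Sym2.eq_swap]; exact hce'') x y z (hmem x hx) hxy hxz hyz
end

section
/- Let G be a connected cubic (3-regular) bipartite simple graph on n vertices, and let e' = {u', w'} and e'' = {u'', w''} be two edges of G sharing no endpoint such that deleting e' and e'' disconnects G into exactly two connected components, with vertex sets V1 (of size n1) containing u' and u'' and V2 (of size n2) containing w' and w''. Assume u' and u'' are not adjacent in G and w' and w'' are not adjacent in G. Let H1 be the induced subgraph of G on V1 together with the added edge e1 = {u', u''}, and let H2 be the induced subgraph of G on V2 together with the added edge e2 = {w', w''}. Suppose that for i = 1, 2 there exist a bijection f_i : V_i → Fin n_i and a proper edge 3-coloring c_i of H_i such that no two edges of the same color cross with respect to f_i, and moreover c_1(e1) = c_2(e2). Then there exist a bijection f : V(G) → Fin n and a proper edge 3-coloring c of G such that no two edges of the same color cross with respect to f. -/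
/-!
Rotate the layout of `H1` so that `u''` is its last vertex and the layout of `H2` so that `w''`
is its first one, and place the two side by side; colour `G` by `c1` on `V1`, by `c2` on `V2`,
and both cut edges by the common colour `κ` of `u'u''` and `w'w''`. Rotations preserve crossings,
and edges on different sides never cross. The cut edge `u''w''` joins consecutive positions, so
it crosses nothing. The cut edge `u'w'` crosses a `κ`-coloured edge `xy` of `G[V1]` exactly when
`u'u''` does, because `x` and `y` lie to the left of both `u''` and `w'`; symmetrically on the
side of `V2`. Properness holds because `κ` is used at `u'` and `u''` in `H1` only by `u'u''`,
which `G` replaces by the cut edges, and `u'u''` is not an edge of `G`.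
-/

/-- Given an injective placement of vertices on the spine, edges with endpoint
positions `a, b` and `x, y` (all four endpoints distinct) *cross* iff exactly one of
`x`, `y` lies strictly between `a` and `b` in the natural order on `Fin m`. -/
def EdgesCross {m : ℕ} (a b x y : Fin m) : Prop :=
  Xor' ((a < x ∧ x < b) ∨ (b < x ∧ x < a)) ((a < y ∧ y < b) ∨ (b < y ∧ y < a))

open Finset Function

section

variable {V W α : Type*}

theorem edgesCross_iff {m : ℕ} {a b x y : Fin m} : EdgesCross a b x y ↔
    ((a < x ∧ x < b ∨ b < x ∧ x < a) ∧ ¬(a < y ∧ y < b ∨ b < y ∧ y < a)) ∨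
      ((a < y ∧ y < b ∨ b < y ∧ y < a) ∧ ¬(a < x ∧ x < b ∨ b < x ∧ x < a)) :=
  Iff.rfl

namespace EdgesCross

variable {m : ℕ} {a b x y : Fin m}

theorem comm_left : EdgesCross a b x y ↔ EdgesCross b a x y := by
  simp only [edgesCross_iff, Fin.lt_def]; omega

theorem comm_right : EdgesCross a b x y ↔ EdgesCross a b y x := by
  simp only [edgesCross_iff, Fin.lt_def]; omega

theorem comm (hax : a ≠ x) (hay : a ≠ y) (hbx : b ≠ x) (hby : b ≠ y) :
    EdgesCross a b x y ↔ EdgesCross x y a b := by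
  rw [← Fin.val_ne_iff] at hax hay hbx hby
  simp only [edgesCross_iff, Fin.lt_def]; omega

theorem add_right_iff [NeZero m] (c : Fin m) (hax : a ≠ x) (hay : a ≠ y) (hbx : b ≠ x)
    (hby : b ≠ y) : EdgesCross (a + c) (b + c) (x + c) (y + c) ↔ EdgesCross a b x y := by
  rw [← Fin.val_ne_iff] at hax hay hbx hby
  simp only [edgesCross_iff, Fin.lt_def, Fin.val_add_eq_ite]
  have := a.2; have := b.2; have := x.2; have := y.2; have := c.2
  split_ifs <;> omega

theorem iff_of_val_eq_add {n k : ℕ} {a' b' x' y' : Fin n} (ha : (a' : ℕ) = k + a)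
    (hb : (b' : ℕ) = k + b) (hx : (x' : ℕ) = k + x) (hy : (y' : ℕ) = k + y) :
    EdgesCross a' b' x' y' ↔ EdgesCross a b x y := by
  simp only [edgesCross_iff, Fin.lt_def]; omega

theorem iff_of_sameSide {b' : Fin m} (hx : x < b ∧ x < b' ∨ b < x ∧ b' < x)
    (hy : y < b ∧ y < b' ∨ b < y ∧ b' < y) : EdgesCross a b x y ↔ EdgesCross a b' x y := by
  simp only [Fin.lt_def] at hx hy
  simp only [edgesCross_iff, Fin.lt_def]; omega

theorem not_of_val_eq_succ (hab : (b : ℕ) = a + 1) : ¬ EdgesCross a b x y := by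
  simp only [edgesCross_iff, Fin.lt_def]; omega

theorem not_of_val_eq_succ' (hab : (b : ℕ) = a + 1) (hxa : x ≠ a) (hya : y ≠ a) (hxb : x ≠ b)
    (hyb : y ≠ b) : ¬ EdgesCross x y a b := by
  rw [← Fin.val_ne_iff] at hxa hya hxb hyb
  simp only [edgesCross_iff, Fin.lt_def]; omega

theorem not_of_lt (hax : a < x) (hay : a < y) (hbx : b < x) (hby : b < y) :
    ¬ EdgesCross a b x y ∧ ¬ EdgesCross x y a b := by
  rw [Fin.lt_def] at hax hay hbx hby
  simp only [edgesCross_iff, Fin.lt_def]; omega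

end EdgesCross

def IsProperEdgeColoring (H : SimpleGraph W) (c : Sym2 W → α) : Prop :=
  ∀ ⦃x y z : W⦄, H.Adj x y → H.Adj x z → y ≠ z → c s(x, y) ≠ c s(x, z)

def NoMonochromaticCrossing {m : ℕ} (H : SimpleGraph W) (f : W → Fin m) (c : Sym2 W → α) :
    Prop :=
  ∀ ⦃p q x y : W⦄, H.Adj p q → H.Adj x y → p ≠ x → p ≠ y → q ≠ x → q ≠ y →
    c s(p, q) = c s(x, y) → ¬ EdgesCross (f p) (f q) (f x) (f y)

namespace NoMonochromaticCrossing

variable {m n : ℕ} {H : SimpleGraph W} {c : Sym2 W → α}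

theorem of_val_eq_add {f : W → Fin m} {f' : W → Fin n} (k : ℕ)
    (hf' : ∀ v, (f' v : ℕ) = k + f v) (h : NoMonochromaticCrossing H f c) :
    NoMonochromaticCrossing H f' c :=
  fun _ _ _ _ hpq hxy hpx hpy hqx hqy hc ↦
    (EdgesCross.iff_of_val_eq_add (hf' _) (hf' _) (hf' _) (hf' _)).not.2 <|
      h hpq hxy hpx hpy hqx hqy hc

theorem exists_equiv_apply_eq {f : W ≃ Fin m} (h : NoMonochromaticCrossing H f c) (w : W)
    (k : Fin m) : ∃ g : W ≃ Fin m, g w = k ∧ NoMonochromaticCrossing H g c := by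
  have : NeZero m := ⟨k.pos.ne'⟩
  refine ⟨f.trans (Equiv.addRight (k - f w)), by simp, ?_⟩
  intro p q x y hpq hxy hpx hpy hqx hqy hc
  simp only [Equiv.trans_apply, Equiv.coe_addRight]
  rw [EdgesCross.add_right_iff _ (f.injective.ne hpx) (f.injective.ne hpy)
    (f.injective.ne hqx) (f.injective.ne hqy)]
  exact h hpq hxy hpx hpy hqx hqy hc

theorem not_edgesCross_of_mem {G : SimpleGraph V} {A : Set V} {HA : SimpleGraph A}
    {cA : Sym2 A → α} {c : Sym2 V → α} {f : V → Fin m}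
    (h : NoMonochromaticCrossing HA (fun v ↦ f v) cA) (hGA : G.induce A ≤ HA)
    (hc : ∀ x y : A, c s(↑x, ↑y) = cA s(x, y)) {p q x y : V} (hp : p ∈ A) (hq : q ∈ A)
    (hx : x ∈ A) (hy : y ∈ A) (hpq : G.Adj p q) (hxy : G.Adj x y) (hpx : p ≠ x) (hpy : p ≠ y)
    (hqx : q ≠ x) (hqy : q ≠ y) (hcol : c s(p, q) = c s(x, y)) :
    ¬ EdgesCross (f p) (f q) (f x) (f y) := by
  lift p to A using hp
  lift q to A using hq
  lift x to A using hx
  lift y to A using hy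
  rw [hc, hc] at hcol
  exact h (hGA hpq) (hGA hxy) (Subtype.coe_ne_coe.1 hpx) (Subtype.coe_ne_coe.1 hpy)
    (Subtype.coe_ne_coe.1 hqx) (Subtype.coe_ne_coe.1 hqy) hcol

end NoMonochromaticCrossing

theorem Finset.exists_equiv_fin_of_disjoint [Fintype V] [DecidableEq V] {A B : Finset V}
    (hAB : Disjoint A B) (hcover : A ∪ B = univ) (gA : (A : Set V) ≃ Fin #A)
    (gB : (B : Set V) ≃ Fin #B) :
    ∃ f : V ≃ Fin (Fintype.card V),
      (∀ v : (A : Set V), (f v : ℕ) = gA v) ∧ ∀ v : (B : Set V), (f v : ℕ) = #A + gB v := by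
  have hcard : #A + #B = Fintype.card V := by
    rw [← card_union_of_disjoint hAB, hcover, card_univ]
  let e : V ≃ (A : Set V) ⊕ (B : Set V) :=
    ((Equiv.Set.univ V).symm.trans (Equiv.setCongr (by rw [← coe_union, hcover, coe_univ]))).trans
      (Equiv.Set.union (disjoint_coe.2 hAB))
  refine ⟨e.trans ((gA.sumCongr gB).trans (finSumFinEquiv.trans (finCongr hcard))), ?_, ?_⟩
  · intro v
    simp [e, Equiv.Set.union_apply_left (disjoint_coe.2 hAB) (a := ⟨v, Or.inl v.2⟩) v.2]
  · intro v
    simp [e, Equiv.Set.union_apply_right (disjoint_coe.2 hAB) (a := ⟨v, Or.inr v.2⟩) v.2]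

theorem Sym2.exists_piecewise_of_disjoint {A B : Set V} (hAB : Disjoint A B)
    (cA : Sym2 A → α) (cB : Sym2 B → α) (κ : α) :
    ∃ c : Sym2 V → α, (∀ x y : A, c s(↑x, ↑y) = cA s(x, y)) ∧
      (∀ x y : B, c s(↑x, ↑y) = cB s(x, y)) ∧ ∀ x y, x ∈ A → y ∈ B → c s(x, y) = κ := by
  classical
  have hinj : ∀ S : Set V, Injective (Sym2.map ((↑) : S → V)) :=
    fun S ↦ Sym2.map.injective Subtype.val_injective
  have hrange : ∀ (S : Set V) {z : Sym2 V} {v : V}, v ∈ z → v ∉ S →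
      ¬ ∃ z', Sym2.map ((↑) : S → V) z' = z := by
    rintro S z v hv hvS ⟨z', rfl⟩
    obtain ⟨v', -, rfl⟩ := Sym2.mem_map.1 hv
    exact hvS v'.2
  refine ⟨extend (Sym2.map (↑)) cA (extend (Sym2.map (↑)) cB fun _ ↦ κ), fun x y ↦ ?_,
    fun x y ↦ ?_, fun x y hx hy ↦ ?_⟩
  · exact (hinj A).extend_apply _ _ s(x, y)
  · rw [extend_apply' _ _ _ (hrange A (Sym2.mem_mk_left _ _) (Set.disjoint_right.1 hAB x.2))]
    exact (hinj B).extend_apply _ _ s(x, y)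
  · rw [extend_apply' _ _ _ (hrange A (Sym2.mem_mk_right _ _) (Set.disjoint_right.1 hAB hy)),
      extend_apply' _ _ _ (hrange B (Sym2.mem_mk_left _ _) (Set.disjoint_left.1 hAB hx))]

theorem SimpleGraph.Adj.mem_of_not_reachable_deleteEdges {G : SimpleGraph V}
    {D : Set (Sym2 V)} {A B : Set V} {a b x y : V} (hxy : G.Adj x y) (hx : x ∈ A) (hy : y ∈ B)
    (hA : ∀ x ∈ A, (G.deleteEdges D).Reachable a x)
    (hB : ∀ y ∈ B, (G.deleteEdges D).Reachable y b) (hab : ¬ (G.deleteEdges D).Reachable a b) :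
    s(x, y) ∈ D := by
  by_contra hD
  exact hab <| (hA x hx).trans <|
    (SimpleGraph.deleteEdges_adj.2 ⟨hxy, hD⟩).reachable.trans (hB y hy)

section CutSide

variable {G : SimpleGraph V} {A : Set V} {HA : SimpleGraph A} {cA : Sym2 A → α}

theorem IsProperEdgeColoring.color_ne_of_not_adj (hproper : IsProperEdgeColoring HA cA)
    (hGA : G.induce A ≤ HA) {a a₂ y : A} (ha : HA.Adj a a₂) (hnadj : ¬ G.Adj a a₂)
    (hy : G.Adj a y) : cA s(a, y) ≠ cA s(a, a₂) :=
  hproper (hGA hy) ha (by rintro rfl; exact hnadj hy)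

variable {c : Sym2 V → α} {a' a'' : A}

theorem color_ne_of_mem_of_cut {b' b'' : V} (hproper : IsProperEdgeColoring HA cA)
    (hGA : G.induce A ≤ HA) (hHA : HA.Adj a' a'') (hnadj : ¬ G.Adj a' a'')
    (hc : ∀ x y : A, c s(↑x, ↑y) = cA s(x, y))
    (hc_cut : ∀ (x : A) y, y ∉ A → c s(↑x, y) = cA s(a', a''))
    (hcut : ∀ (x : A) y, y ∉ A → G.Adj x y → (x : V) = a' ∧ y = b' ∨ (x : V) = a'' ∧ y = b'')
    (x : A) {y z : V} (hxy : G.Adj x y) (hxz : G.Adj x z) (hyz : y ≠ z) :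
    c s(↑x, y) ≠ c s(↑x, z) := by
  have hmixed : ∀ (y : A) {z : V}, z ∉ A → G.Adj x y → G.Adj x z →
      c s(↑x, ↑y) ≠ c s(↑x, z) := by
    intro y z hz hxy hxz
    rw [hc, hc_cut x z hz]
    rcases hcut x z hz hxz with ⟨hx, -⟩ | ⟨hx, -⟩ <;> obtain rfl := Subtype.ext hx
    · exact hproper.color_ne_of_not_adj hGA hHA hnadj hxy
    · rw [Sym2.eq_swap (a := a')]
      exact hproper.color_ne_of_not_adj hGA hHA.symm (fun h ↦ hnadj h.symm) hxy
  by_cases hy : y ∈ A <;> by_cases hz : z ∈ A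
  · lift y to A using hy
    lift z to A using hz
    rw [hc, hc]
    exact hproper (hGA hxy) (hGA hxz) (Subtype.coe_ne_coe.1 hyz)
  · lift y to A using hy
    exact hmixed y hz hxy hxz
  · lift z to A using hz
    exact (hmixed z hy hxz hxy).symm
  · have ha : (a' : V) ≠ a'' := Subtype.coe_ne_coe.2 hHA.ne
    obtain ⟨hx, rfl⟩ | ⟨hx, rfl⟩ := hcut x y hy hxy <;>
      obtain ⟨hx', rfl⟩ | ⟨hx', rfl⟩ := hcut x z hz hxz
    exacts [(hyz rfl).elim, (ha (hx.symm.trans hx')).elim, (ha (hx'.symm.trans hx)).elim,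
      (hyz rfl).elim]

/-- Since `x` and `y` lie on the same side of `a''` as of `b`, the edge `a'b` crosses `xy` exactly
when the edge `a'a''` of `HA` does. -/
theorem not_edgesCross_cutEdge_of_mem {m : ℕ} {f : V → Fin m} {b : V}
    (hproper : IsProperEdgeColoring HA cA) (hGA : G.induce A ≤ HA) (hHA : HA.Adj a' a'')
    (hnadj : ¬ G.Adj a' a'') (hcross : NoMonochromaticCrossing HA (fun v ↦ f v) cA)
    (hc : ∀ x y : A, c s(↑x, ↑y) = cA s(x, y))
    (hside : ∀ x : A, x ≠ a'' → f x < f a'' ∧ f x < f b ∨ f a'' < f x ∧ f b < f x)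
    {x y : A} (hxy : G.Adj x y) (hx : x ≠ a') (hy : y ≠ a')
    (hcol : c s(↑x, ↑y) = cA s(a', a'')) : ¬ EdgesCross (f a') (f b) (f x) (f y) := by
  rw [hc] at hcol
  have hnadj' : ¬ G.Adj a'' a' := fun h ↦ hnadj h.symm
  have hx'' : x ≠ a'' := by
    rintro rfl
    exact hproper.color_ne_of_not_adj hGA hHA.symm hnadj' hxy
      (hcol.trans (congrArg cA Sym2.eq_swap))
  have hy'' : y ≠ a'' := by
    rintro rfl
    exact hproper.color_ne_of_not_adj hGA hHA.symm hnadj' hxy.symm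
      ((congrArg cA Sym2.eq_swap).trans (hcol.trans (congrArg cA Sym2.eq_swap)))
  rw [← EdgesCross.iff_of_sameSide (hside x hx'') (hside y hy'')]
  exact hcross hHA (hGA hxy) hx.symm hy.symm hx''.symm hy''.symm hcol.symm

end CutSide

section TwoEdgeCut

variable {G : SimpleGraph V} {A B : Set V} {HA : SimpleGraph A} {HB : SimpleGraph B}
  {cA : Sym2 A → α} {cB : Sym2 B → α} {c : Sym2 V → α}

theorem SimpleGraph.Adj.eq_of_twoEdgeCut {u' u'' w' w'' x y : V} (hAB : Disjoint A B)
    (hw' : w' ∈ B) (hw'' : w'' ∈ B)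
    (hA : ∀ x ∈ A, (G.deleteEdges {s(u', w'), s(u'', w'')}).Reachable u' x)
    (hB : ∀ y ∈ B, (G.deleteEdges {s(u', w'), s(u'', w'')}).Reachable y w')
    (hsep : ¬ (G.deleteEdges {s(u', w'), s(u'', w'')}).Reachable u' w')
    (hxy : G.Adj x y) (hx : x ∈ A) (hy : y ∈ B) : x = u' ∧ y = w' ∨ x = u'' ∧ y = w'' := by
  have hD := hxy.mem_of_not_reachable_deleteEdges hx hy hA hB hsep
  simp only [Set.mem_insert_iff, Set.mem_singleton_iff, Sym2.eq_iff] at hD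
  rcases hD with (h | ⟨rfl, -⟩) | (h | ⟨rfl, -⟩)
  exacts [.inl h, (Set.disjoint_left.1 hAB hx hw').elim, .inr h,
    (Set.disjoint_left.1 hAB hx hw'').elim]

variable {u' u'' : A} {w' w'' : B}

theorem adj_cases_of_twoEdgeCut (hcover : ∀ v, v ∈ A ∨ v ∈ B)
    (hcut : ∀ x y, G.Adj x y → x ∈ A → y ∈ B → x = u' ∧ y = w' ∨ x = u'' ∧ y = w'')
    {x y : V} (hxy : G.Adj x y) :
    x ∈ A ∧ y ∈ A ∨ x ∈ B ∧ y ∈ B ∨ s(x, y) = s(↑u', ↑w') ∨ s(x, y) = s(↑u'', ↑w'') := by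
  rcases hcover x with hx | hx <;> rcases hcover y with hy | hy
  · exact .inl ⟨hx, hy⟩
  · rcases hcut x y hxy hx hy with ⟨rfl, rfl⟩ | ⟨rfl, rfl⟩ <;> simp
  · rcases hcut y x hxy.symm hy hx with ⟨rfl, rfl⟩ | ⟨rfl, rfl⟩ <;> simp [Sym2.eq_swap]
  · exact .inr (.inl ⟨hx, hy⟩)

theorem isProperEdgeColoring_of_twoEdgeCut (hcover : ∀ v, v ∈ A ∨ v ∈ B)
    (hcut : ∀ x y, G.Adj x y → x ∈ A → y ∈ B → x = u' ∧ y = w' ∨ x = u'' ∧ y = w'')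
    (hpA : IsProperEdgeColoring HA cA) (hGA : G.induce A ≤ HA) (hHA : HA.Adj u' u'')
    (hnA : ¬ G.Adj u' u'') (hpB : IsProperEdgeColoring HB cB) (hGB : G.induce B ≤ HB)
    (hHB : HB.Adj w' w'') (hnB : ¬ G.Adj w' w'') (hcA : ∀ x y : A, c s(↑x, ↑y) = cA s(x, y))
    (hcB : ∀ x y : B, c s(↑x, ↑y) = cB s(x, y))
    (hcAB : ∀ x y, x ∈ A → y ∈ B → c s(x, y) = cA s(u', u''))
    (hκ : cA s(u', u'') = cB s(w', w'')) :
    IsProperEdgeColoring G c := by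
  intro x y z hxy hxz hyz
  rcases hcover x with hx | hx
  · lift x to A using hx
    exact color_ne_of_mem_of_cut hpA hGA hHA hnA hcA
      (fun x y hy ↦ hcAB x y x.2 ((hcover y).resolve_left hy))
      (fun x y hy hxy ↦ hcut x y hxy x.2 ((hcover y).resolve_left hy)) x hxy hxz hyz
  · lift x to B using hx
    refine color_ne_of_mem_of_cut (b' := (u' : V)) (b'' := (u'' : V)) hpB hGB hHB hnB hcB
      (fun x y hy ↦ ?_) (fun x y hy hxy ↦ ?_) x hxy hxz hyz
    · rw [Sym2.eq_swap, hcAB y x ((hcover y).resolve_right hy) x.2, hκ]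
    · rcases hcut y x hxy.symm ((hcover y).resolve_right hy) x.2 with ⟨h1, h2⟩ | ⟨h1, h2⟩
      exacts [.inl ⟨h2, h1⟩, .inr ⟨h2, h1⟩]

theorem not_edgesCross_cutEdge_of_twoEdgeCut {n k : ℕ} {f : V → Fin n}
    (hcover : ∀ v, v ∈ A ∨ v ∈ B)
    (hcut : ∀ x y, G.Adj x y → x ∈ A → y ∈ B → x = u' ∧ y = w' ∨ x = u'' ∧ y = w'')
    (hpA : IsProperEdgeColoring HA cA) (hGA : G.induce A ≤ HA) (hHA : HA.Adj u' u'')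
    (hnA : ¬ G.Adj u' u'') (hpB : IsProperEdgeColoring HB cB) (hGB : G.induce B ≤ HB)
    (hHB : HB.Adj w' w'') (hnB : ¬ G.Adj w' w'') (hcA : ∀ x y : A, c s(↑x, ↑y) = cA s(x, y))
    (hcB : ∀ x y : B, c s(↑x, ↑y) = cB s(x, y)) (hκ : cA s(u', u'') = cB s(w', w''))
    (hf : Injective f) (hfA : ∀ v ∈ A, (f v : ℕ) < k) (hfB : ∀ v ∈ B, k ≤ f v)
    (hu''k : (f u'' : ℕ) + 1 = k) (hw''k : (f w'' : ℕ) = k)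
    (hcrossA : NoMonochromaticCrossing HA (fun v ↦ f v) cA)
    (hcrossB : NoMonochromaticCrossing HB (fun v ↦ f v) cB)
    {x y : V} (hxy : G.Adj x y) (hxu : x ≠ u') (hyu : y ≠ u') (hxw : x ≠ w') (hyw : y ≠ w')
    (hcol : c s(x, y) = cA s(u', u'')) : ¬ EdgesCross (f u') (f w') (f x) (f y) := by
  have hfne : ∀ {a b : V}, a ≠ b → (f a : ℕ) ≠ f b := fun h ↦ Fin.val_ne_of_ne (hf.ne h)
  have hlt : ∀ {a b : V}, a ∈ A → b ∈ B → f a < f b := fun ha hb ↦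
    Fin.lt_def.2 ((hfA _ ha).trans_le (hfB _ hb))
  rcases adj_cases_of_twoEdgeCut hcover hcut hxy with ⟨hx, hy⟩ | ⟨hx, hy⟩ | h | h
  · lift x to A using hx
    lift y to A using hy
    refine not_edgesCross_cutEdge_of_mem hpA hGA hHA hnA hcrossA hcA (fun v hv ↦ .inl ?_) hxy
      (Subtype.coe_ne_coe.1 hxu) (Subtype.coe_ne_coe.1 hyu) hcol
    have := hfA v v.2; have := hfne (Subtype.coe_ne_coe.2 hv)
    exact ⟨Fin.lt_def.2 (by omega), hlt v.2 w'.2⟩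
  · lift x to B using hx
    lift y to B using hy
    rw [EdgesCross.comm_left]
    refine not_edgesCross_cutEdge_of_mem hpB hGB hHB hnB hcrossB hcB (fun v hv ↦ .inr ?_) hxy
      (Subtype.coe_ne_coe.1 hxw) (Subtype.coe_ne_coe.1 hyw) (hcol.trans hκ)
    have := hfB v v.2; have := hfne (Subtype.coe_ne_coe.2 hv)
    exact ⟨Fin.lt_def.2 (by omega), hlt u'.2 v.2⟩
  · rcases Sym2.eq_iff.1 h with ⟨rfl, -⟩ | ⟨rfl, -⟩ <;> contradiction
  · have h' : ¬ EdgesCross (f u') (f w') (f u'') (f w'') :=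
      EdgesCross.not_of_val_eq_succ' (by omega) (hf.ne (Subtype.coe_ne_coe.2 hHA.ne))
        (hlt u''.2 w'.2).ne' (hlt u'.2 w''.2).ne (hf.ne (Subtype.coe_ne_coe.2 hHB.ne))
    rcases Sym2.eq_iff.1 h with ⟨rfl, rfl⟩ | ⟨rfl, rfl⟩
    exacts [h', EdgesCross.comm_right.not.1 h']

theorem noMonochromaticCrossing_of_twoEdgeCut {n k : ℕ} {f : V → Fin n}
    (hcover : ∀ v, v ∈ A ∨ v ∈ B)
    (hcut : ∀ x y, G.Adj x y → x ∈ A → y ∈ B → x = u' ∧ y = w' ∨ x = u'' ∧ y = w'')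
    (hpA : IsProperEdgeColoring HA cA) (hGA : G.induce A ≤ HA) (hHA : HA.Adj u' u'')
    (hnA : ¬ G.Adj u' u'') (hpB : IsProperEdgeColoring HB cB) (hGB : G.induce B ≤ HB)
    (hHB : HB.Adj w' w'') (hnB : ¬ G.Adj w' w'') (hcA : ∀ x y : A, c s(↑x, ↑y) = cA s(x, y))
    (hcB : ∀ x y : B, c s(↑x, ↑y) = cB s(x, y))
    (hcAB : ∀ x y, x ∈ A → y ∈ B → c s(x, y) = cA s(u', u''))
    (hκ : cA s(u', u'') = cB s(w', w'')) (hf : Injective f)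
    (hfA : ∀ v ∈ A, (f v : ℕ) < k) (hfB : ∀ v ∈ B, k ≤ f v) (hu''k : (f u'' : ℕ) + 1 = k)
    (hw''k : (f w'' : ℕ) = k) (hcrossA : NoMonochromaticCrossing HA (fun v ↦ f v) cA)
    (hcrossB : NoMonochromaticCrossing HB (fun v ↦ f v) cB) :
    NoMonochromaticCrossing G f c := by
  have hlt : ∀ {a b : V}, a ∈ A → b ∈ B → f a < f b := fun ha hb ↦
    Fin.lt_def.2 ((hfA _ ha).trans_le (hfB _ hb))
  have hu'w' : ∀ {x y : V}, G.Adj x y → x ≠ u' → y ≠ u' → x ≠ w' → y ≠ w' →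
      c s(x, y) = c s(↑u', ↑w') → ¬ EdgesCross (f u') (f w') (f x) (f y) :=
    fun hxy hxu hyu hxw hyw hcol ↦ not_edgesCross_cutEdge_of_twoEdgeCut hcover hcut hpA hGA hHA
      hnA hpB hGB hHB hnB hcA hcB hκ hf hfA hfB hu''k hw''k hcrossA hcrossB hxy hxu hyu hxw hyw
      (hcol.trans (hcAB _ _ u'.2 w'.2))
  have hcutEdge : ∀ {p q x y : V}, s(p, q) = s(↑u', ↑w') ∨ s(p, q) = s(↑u'', ↑w'') →
      G.Adj x y → p ≠ x → p ≠ y → q ≠ x → q ≠ y → c s(p, q) = c s(x, y) →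
      ¬ EdgesCross (f p) (f q) (f x) (f y) ∧ ¬ EdgesCross (f x) (f y) (f p) (f q) := by
    intro p q x y he hxy hpx hpy hqx hqy hcol
    suffices h : ¬ EdgesCross (f p) (f q) (f x) (f y) from
      ⟨h, (EdgesCross.comm (hf.ne hpx) (hf.ne hpy) (hf.ne hqx) (hf.ne hqy)).not.1 h⟩
    rcases he with he | he <;> rcases Sym2.eq_iff.1 he with ⟨rfl, rfl⟩ | ⟨rfl, rfl⟩
    · exact hu'w' hxy hpx.symm hpy.symm hqx.symm hqy.symm hcol.symm
    · rw [EdgesCross.comm_left]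
      exact hu'w' hxy hqx.symm hqy.symm hpx.symm hpy.symm
        (hcol.symm.trans (congrArg c Sym2.eq_swap))
    · exact EdgesCross.not_of_val_eq_succ (by omega)
    · exact EdgesCross.comm_left.not.1 (EdgesCross.not_of_val_eq_succ (by omega))
  intro p q x y hpq hxy hpx hpy hqx hqy hcol
  obtain ⟨hp, hq⟩ | ⟨hp, hq⟩ | he := adj_cases_of_twoEdgeCut hcover hcut hpq
  · obtain ⟨hx, hy⟩ | ⟨hx, hy⟩ | he := adj_cases_of_twoEdgeCut hcover hcut hxy
    · exact hcrossA.not_edgesCross_of_mem hGA hcA hp hq hx hy hpq hxy hpx hpy hqx hqy hcol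
    · exact (EdgesCross.not_of_lt (hlt hp hx) (hlt hp hy) (hlt hq hx) (hlt hq hy)).1
    · exact (hcutEdge he hpq hpx.symm hqx.symm hpy.symm hqy.symm hcol.symm).2
  · obtain ⟨hx, hy⟩ | ⟨hx, hy⟩ | he := adj_cases_of_twoEdgeCut hcover hcut hxy
    · exact (EdgesCross.not_of_lt (hlt hx hp) (hlt hx hq) (hlt hy hp) (hlt hy hq)).2
    · exact hcrossB.not_edgesCross_of_mem hGB hcB hp hq hx hy hpq hxy hpx hpy hqx hqy hcol
    · exact (hcutEdge he hpq hpx.symm hqx.symm hpy.symm hqy.symm hcol.symm).2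
  · exact (hcutEdge he hxy hpx hpy hqx hqy hcol).1

end TwoEdgeCut

end

theorem combined_dispersable_book_embedding_general
    {V : Type*} [Fintype V] [DecidableEq V]
    (G : SimpleGraph V)
    (u' w' u'' w'' : V)
    (hshare : ({u', w'} : Set V) ∩ ({u'', w''} : Set V) = ∅)
    (V1 V2 : Finset V)
    (hu' : u' ∈ V1) (hu'' : u'' ∈ V1) (hw' : w' ∈ V2) (hw'' : w'' ∈ V2)
    (hV12 : Disjoint V1 V2) (hcover : V1 ∪ V2 = Finset.univ)
    (hV1conn : ∀ x ∈ V1, ∀ y ∈ V1,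
      (G.deleteEdges {s(u', w'), s(u'', w'')}).Reachable x y)
    (hV2conn : ∀ x ∈ V2, ∀ y ∈ V2,
      (G.deleteEdges {s(u', w'), s(u'', w'')}).Reachable x y)
    (hsep : ¬ (G.deleteEdges {s(u', w'), s(u'', w'')}).Reachable u' w')
    (hnadj1 : ¬ G.Adj u' u'') (hnadj2 : ¬ G.Adj w' w'')
    (H1 : SimpleGraph ↥(V1 : Set V))
    (hH1 : H1 = G.induce (V1 : Set V) ⊔
      SimpleGraph.fromEdgeSet {s((⟨u', hu'⟩ : ↥(V1 : Set V)), (⟨u'', hu''⟩ : ↥(V1 : Set V)))})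
    (H2 : SimpleGraph ↥(V2 : Set V))
    (hH2 : H2 = G.induce (V2 : Set V) ⊔
      SimpleGraph.fromEdgeSet {s((⟨w', hw'⟩ : ↥(V2 : Set V)), (⟨w'', hw''⟩ : ↥(V2 : Set V)))})
    (f1 : ↥(V1 : Set V) ≃ Fin V1.card)
    (c1 : Sym2 ↥(V1 : Set V) → Fin 3)
    (hc1proper : ∀ ⦃x y z : ↥(V1 : Set V)⦄, H1.Adj x y → H1.Adj x z → y ≠ z →
      c1 s(x, y) ≠ c1 s(x, z))
    (hc1cross : ∀ ⦃p q x y : ↥(V1 : Set V)⦄, H1.Adj p q → H1.Adj x y →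
      p ≠ x → p ≠ y → q ≠ x → q ≠ y → c1 s(p, q) = c1 s(x, y) →
      ¬ EdgesCross (f1 p) (f1 q) (f1 x) (f1 y))
    (f2 : ↥(V2 : Set V) ≃ Fin V2.card)
    (c2 : Sym2 ↥(V2 : Set V) → Fin 3)
    (hc2proper : ∀ ⦃x y z : ↥(V2 : Set V)⦄, H2.Adj x y → H2.Adj x z → y ≠ z →
      c2 s(x, y) ≠ c2 s(x, z))
    (hc2cross : ∀ ⦃p q x y : ↥(V2 : Set V)⦄, H2.Adj p q → H2.Adj x y →
      p ≠ x → p ≠ y → q ≠ x → q ≠ y → c2 s(p, q) = c2 s(x, y) →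
      ¬ EdgesCross (f2 p) (f2 q) (f2 x) (f2 y))
    (hsamecolor : c1 s(⟨u', hu'⟩, ⟨u'', hu''⟩) = c2 s(⟨w', hw'⟩, ⟨w'', hw''⟩)) :
    ∃ (f : V ≃ Fin (Fintype.card V)) (c : Sym2 V → Fin 3),
      (∀ ⦃x y z : V⦄, G.Adj x y → G.Adj x z → y ≠ z → c s(x, y) ≠ c s(x, z)) ∧
      (∀ ⦃p q x y : V⦄, G.Adj p q → G.Adj x y →
        p ≠ x → p ≠ y → q ≠ x → q ≠ y → c s(p, q) = c s(x, y) →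
        ¬ EdgesCross (f p) (f q) (f x) (f y)) := by
  subst hH1 hH2
  have hdisj := disjoint_coe.2 hV12
  have hcover' : ∀ v, v ∈ (V1 : Set V) ∨ v ∈ (V2 : Set V) := fun v ↦ by
    simpa using hcover.ge (mem_univ v)
  have hcut : ∀ x y, G.Adj x y → x ∈ (V1 : Set V) → y ∈ (V2 : Set V) →
      x = u' ∧ y = w' ∨ x = u'' ∧ y = w'' := fun x y hxy ↦
    hxy.eq_of_twoEdgeCut hdisj hw' hw'' (hV1conn u' hu') (fun y hy ↦ hV2conn y hy w' hw') hsep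
  have hshare' := Set.eq_empty_iff_forall_notMem.1 hshare
  have hH1 : (G.induce (V1 : Set V) ⊔ SimpleGraph.fromEdgeSet {s(⟨u', hu'⟩, ⟨u'', hu''⟩)}).Adj
      ⟨u', hu'⟩ ⟨u'', hu''⟩ :=
    .inr ⟨rfl, Subtype.coe_ne_coe.1 fun h : u' = u'' ↦ hshare' u' (by simp [h])⟩
  have hH2 : (G.induce (V2 : Set V) ⊔ SimpleGraph.fromEdgeSet {s(⟨w', hw'⟩, ⟨w'', hw''⟩)}).Adj
      ⟨w', hw'⟩ ⟨w'', hw''⟩ :=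
    .inr ⟨rfl, Subtype.coe_ne_coe.1 fun h : w' = w'' ↦ hshare' w' (by simp [h])⟩
  have hpos := card_pos.2 ⟨u', hu'⟩
  obtain ⟨g1, hg1, hcross1⟩ := NoMonochromaticCrossing.exists_equiv_apply_eq hc1cross
    ⟨u'', hu''⟩ ⟨#V1 - 1, by omega⟩
  obtain ⟨g2, hg2, hcross2⟩ := NoMonochromaticCrossing.exists_equiv_apply_eq hc2cross
    ⟨w'', hw''⟩ ⟨0, card_pos.2 ⟨w', hw'⟩⟩
  obtain ⟨f, hf1, hf2⟩ := exists_equiv_fin_of_disjoint hV12 hcover g1 g2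
  obtain ⟨c, hcc1, hcc2, hcc12⟩ := Sym2.exists_piecewise_of_disjoint hdisj c1 c2 _
  refine ⟨f, c, isProperEdgeColoring_of_twoEdgeCut hcover' hcut hc1proper le_sup_left hH1
    hnadj1 hc2proper le_sup_left hH2 hnadj2 hcc1 hcc2 hcc12 hsamecolor,
    noMonochromaticCrossing_of_twoEdgeCut (k := #V1) hcover' hcut hc1proper le_sup_left
    hH1 hnadj1 hc2proper le_sup_left hH2 hnadj2 hcc1 hcc2 hcc12 hsamecolor f.injective
    (fun v hv ↦ (hf1 ⟨v, hv⟩).trans_lt (g1 _).2) (fun v hv ↦ (hf2 ⟨v, hv⟩).ge.trans' (by omega))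
    ?_ ?_ (hcross1.of_val_eq_add 0 (by simpa using hf1)) (hcross2.of_val_eq_add #V1 hf2)⟩
  · rw [hf1 ⟨u'', hu''⟩, hg1, Fin.val_mk]
    omega
  · rw [hf2 ⟨w'', hw''⟩, hg2, Fin.val_mk, add_zero]

/-- With `G`, the two-edge cutset `{e', e''}` and the halves
`H1 = G[V1] + u'u''`, `H2 = G[V2] + w'w''` as in the main construction: if each `H_i`
admits a vertex bijection `f_i : V_i ≃ Fin n_i` and a proper edge 3-coloring `c_i`
with no two same-colored edges crossing, and `c1(u'u'') = c2(w'w'')`, then `G` admits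
a vertex bijection `f : V ≃ Fin n` and a proper edge 3-coloring with no two
same-colored edges crossing (a dispersable book embedding in 3 pages). -/
theorem combined_dispersable_book_embedding
    {V : Type*} [Fintype V] [DecidableEq V]
    (G : SimpleGraph V) [DecidableRel G.Adj]
    (hconn : G.Connected) (hreg : G.IsRegularOfDegree 3)
    (b : V → Bool) (hb : ∀ ⦃x y : V⦄, G.Adj x y → b x ≠ b y)
    (u' w' u'' w'' : V)
    (he' : G.Adj u' w') (he'' : G.Adj u'' w'')
    (hshare : ({u', w'} : Set V) ∩ ({u'', w''} : Set V) = ∅)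
    (V1 V2 : Finset V)
    (hu' : u' ∈ V1) (hu'' : u'' ∈ V1) (hw' : w' ∈ V2) (hw'' : w'' ∈ V2)
    (hV12 : Disjoint V1 V2) (hcover : V1 ∪ V2 = Finset.univ)
    (hV1conn : ∀ x ∈ V1, ∀ y ∈ V1,
      (G.deleteEdges {s(u', w'), s(u'', w'')}).Reachable x y)
    (hV2conn : ∀ x ∈ V2, ∀ y ∈ V2,
      (G.deleteEdges {s(u', w'), s(u'', w'')}).Reachable x y)
    (hsep : ¬ (G.deleteEdges {s(u', w'), s(u'', w'')}).Reachable u' w')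
    (hnadj1 : ¬ G.Adj u' u'') (hnadj2 : ¬ G.Adj w' w'')
    (H1 : SimpleGraph ↥(V1 : Set V))
    (hH1 : H1 = G.induce (V1 : Set V) ⊔
      SimpleGraph.fromEdgeSet {s((⟨u', hu'⟩ : ↥(V1 : Set V)), (⟨u'', hu''⟩ : ↥(V1 : Set V)))})
    (H2 : SimpleGraph ↥(V2 : Set V))
    (hH2 : H2 = G.induce (V2 : Set V) ⊔
      SimpleGraph.fromEdgeSet {s((⟨w', hw'⟩ : ↥(V2 : Set V)), (⟨w'', hw''⟩ : ↥(V2 : Set V)))})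
    (f1 : ↥(V1 : Set V) ≃ Fin V1.card)
    (c1 : Sym2 ↥(V1 : Set V) → Fin 3)
    (hc1proper : ∀ ⦃x y z : ↥(V1 : Set V)⦄, H1.Adj x y → H1.Adj x z → y ≠ z →
      c1 s(x, y) ≠ c1 s(x, z))
    (hc1cross : ∀ ⦃p q x y : ↥(V1 : Set V)⦄, H1.Adj p q → H1.Adj x y →
      p ≠ x → p ≠ y → q ≠ x → q ≠ y → c1 s(p, q) = c1 s(x, y) →
      ¬ EdgesCross (f1 p) (f1 q) (f1 x) (f1 y))
    (f2 : ↥(V2 : Set V) ≃ Fin V2.card)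
    (c2 : Sym2 ↥(V2 : Set V) → Fin 3)
    (hc2proper : ∀ ⦃x y z : ↥(V2 : Set V)⦄, H2.Adj x y → H2.Adj x z → y ≠ z →
      c2 s(x, y) ≠ c2 s(x, z))
    (hc2cross : ∀ ⦃p q x y : ↥(V2 : Set V)⦄, H2.Adj p q → H2.Adj x y →
      p ≠ x → p ≠ y → q ≠ x → q ≠ y → c2 s(p, q) = c2 s(x, y) →
      ¬ EdgesCross (f2 p) (f2 q) (f2 x) (f2 y))
    (hsamecolor : c1 s(⟨u', hu'⟩, ⟨u'', hu''⟩) = c2 s(⟨w', hw'⟩, ⟨w'', hw''⟩)) :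
    ∃ (f : V ≃ Fin (Fintype.card V)) (c : Sym2 V → Fin 3),
      (∀ ⦃x y z : V⦄, G.Adj x y → G.Adj x z → y ≠ z → c s(x, y) ≠ c s(x, z)) ∧
      (∀ ⦃p q x y : V⦄, G.Adj p q → G.Adj x y →
        p ≠ x → p ≠ y → q ≠ x → q ≠ y → c s(p, q) = c s(x, y) →
        ¬ EdgesCross (f p) (f q) (f x) (f y)) :=
  combined_dispersable_book_embedding_general G u' w' u'' w'' hshare V1 V2 hu' hu'' hw' hw'' hV12
    hcover hV1conn hV2conn hsep hnadj1 hnadj2 H1 hH1 H2 hH2 f1 c1 hc1proper hc1cross f2 c2 hc2proper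
    hc2cross hsamecolor
end
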